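/- arXiv:2605.01269 — 3 statements merged into one kernel-verified Lean document; each statement's English description precedes it below -/
import Mathlib

section
/- Let k ≥ 2 and n ≥ k+1, let D be a directed (k−1)-tree on n vertices, let S be a minimum separator of D, and let B₁,…,B_t be the strong components of D − S. For every nonempty subset J ⊆ {1,…,t}, the induced subdigraph D[S ∪ ⋃_{j∈J} V(B_j)] is itself a directed (k−1)-tree. -/
/-- A finite strict digraph: a finite vertex set and a finite set of arcs
(ordered pairs), with no loops, and all arc endpoints in the vertex set. -/
structure Dgraph where
  verts : Finset ℕ
  arcs : Finset (ℕ × ℕ)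
  arcs_mem : ∀ e ∈ arcs, e.1 ∈ verts ∧ e.2 ∈ verts
  no_loops : ∀ e ∈ arcs, e.1 ≠ e.2

namespace Dgraph

/-- `H` is a subdigraph of `D`. -/
def IsSubdigraph (H D : Dgraph) : Prop := H.verts ⊆ D.verts ∧ H.arcs ⊆ D.arcs

/-- Reachability by a directed path. -/
def Reach (D : Dgraph) (u v : ℕ) : Prop :=
  Relation.ReflTransGen (fun a b => (a, b) ∈ D.arcs) u v

/-- `D` is strongly connected. -/
def StronglyConnected (D : Dgraph) : Prop :=
  ∀ u ∈ D.verts, ∀ v ∈ D.verts, D.Reach u v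

/-- Deletion of a set of vertices. -/
def delete (D : Dgraph) (S : Finset ℕ) : Dgraph where
  verts := D.verts \ S
  arcs := D.arcs.filter (fun e => e.1 ∉ S ∧ e.2 ∉ S)
  arcs_mem := by
    intro e he
    simp only [Finset.mem_filter] at he
    have h := D.arcs_mem e he.1
    simp only [Finset.mem_sdiff]
    exact ⟨⟨h.1, he.2.1⟩, ⟨h.2, he.2.2⟩⟩
  no_loops := fun e he => D.no_loops e (Finset.mem_filter.mp he).1

/-- The subdigraph induced by a set of vertices. -/
def induce (D : Dgraph) (S : Finset ℕ) : Dgraph where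
  verts := D.verts ∩ S
  arcs := D.arcs.filter (fun e => e.1 ∈ S ∧ e.2 ∈ S)
  arcs_mem := by
    intro e he
    simp only [Finset.mem_filter] at he
    have h := D.arcs_mem e he.1
    simp only [Finset.mem_inter]
    exact ⟨⟨h.1, he.2.1⟩, ⟨h.2, he.2.2⟩⟩
  no_loops := fun e he => D.no_loops e (Finset.mem_filter.mp he).1

/-- The complete digraph on a vertex set `S`. -/
def completeOn (S : Finset ℕ) : Dgraph where
  verts := S
  arcs := (S ×ˢ S).filter (fun e => e.1 ≠ e.2)
  arcs_mem := by
    intro e he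
    simp only [Finset.mem_filter, Finset.mem_product] at he
    exact ⟨he.1.1, he.1.2⟩
  no_loops := fun e he => (Finset.mem_filter.mp he).2

/-- Adding the arc `(u, v)` (when this is a legal new arc). -/
def addArc (D : Dgraph) (u v : ℕ) : Dgraph where
  verts := D.verts
  arcs := if u ∈ D.verts ∧ v ∈ D.verts ∧ u ≠ v then insert (u, v) D.arcs else D.arcs
  arcs_mem := by
    intro e he
    split at he
    · rcases Finset.mem_insert.mp he with h | h
      · subst h; exact ⟨by tauto, by tauto⟩
      · exact D.arcs_mem e h
    · exact D.arcs_mem e he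
  no_loops := by
    intro e he
    split at he
    · rcases Finset.mem_insert.mp he with h | h
      · subst h; tauto
      · exact D.no_loops e h
    · exact D.no_loops e he

/-- `D` is `k`-strongly connected: it has at least `k+1` vertices and removing
any fewer than `k` vertices leaves a strongly connected digraph. -/
def KStrong (D : Dgraph) (k : ℕ) : Prop :=
  k + 1 ≤ D.verts.card ∧
    ∀ S : Finset ℕ, S.card < k → StronglyConnected (D.delete S)

/-- `(u, v)` is an arc of the complement of `D`. -/
def MissingArc (D : Dgraph) (u v : ℕ) : Prop :=
  u ∈ D.verts ∧ v ∈ D.verts ∧ u ≠ v ∧ (u, v) ∉ D.arcs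

/-- `D` is `𝒟ₖ`-saturated: it has no `k`-strongly connected subdigraph, but
adding any missing arc creates one. -/
def DSaturated (D : Dgraph) (k : ℕ) : Prop :=
  (∀ H : Dgraph, H.IsSubdigraph D → ¬ H.KStrong k) ∧
    ∀ u v : ℕ, D.MissingArc u v →
      ∃ H : Dgraph, H.IsSubdigraph (D.addArc u v) ∧ H.KStrong k

/-- `S` is a separator of `D`. -/
def IsSeparator (D : Dgraph) (S : Finset ℕ) : Prop :=
  S ⊆ D.verts ∧
    (¬ StronglyConnected (D.delete S) ∨ (D.delete S).verts.card ≤ 1)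

/-- `S` is a minimum separator of `D`. -/
def IsMinSeparator (D : Dgraph) (S : Finset ℕ) : Prop :=
  D.IsSeparator S ∧ ∀ T : Finset ℕ, D.IsSeparator T → S.card ≤ T.card

/-- `B` is the vertex set of a strong component of `D`: a maximal set of
vertices inducing a strongly connected subdigraph. -/
def IsStrongComponent (D : Dgraph) (B : Finset ℕ) : Prop :=
  B ⊆ D.verts ∧ B.Nonempty ∧ StronglyConnected (D.induce B) ∧
    ∀ B' : Finset ℕ, B ⊆ B' → B' ⊆ D.verts →
      StronglyConnected (D.induce B') → B' = B

/-- The reciprocal-degree of `v` in `D`. -/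
def recipDeg (D : Dgraph) (v : ℕ) : ℕ :=
  (D.verts.filter (fun w => (v, w) ∈ D.arcs ∧ (w, v) ∈ D.arcs)).card

/-- Extend `D` by a new vertex `v`: bidirectional arcs to every vertex of `K`,
and unidirectional arcs (all out of `v` if `out`, else all into `v`) to every
other vertex of `D`. -/
def extend (D : Dgraph) (v : ℕ) (K : Finset ℕ) (out : Bool) : Dgraph where
  verts := insert v D.verts
  arcs := D.arcs
    ∪ ((K ∩ D.verts).filter (· ≠ v)).image (fun w => (w, v))
    ∪ ((K ∩ D.verts).filter (· ≠ v)).image (fun w => (v, w))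
    ∪ (if out then ((D.verts \ K).filter (· ≠ v)).image (fun w => (v, w))
        else ((D.verts \ K).filter (· ≠ v)).image (fun w => (w, v)))
  arcs_mem := by
    intro e he
    rcases Finset.mem_union.mp he with h | h
    · rcases Finset.mem_union.mp h with h | h
      · rcases Finset.mem_union.mp h with h | h
        · have h2 := D.arcs_mem e h
          exact ⟨Finset.mem_insert_of_mem h2.1, Finset.mem_insert_of_mem h2.2⟩
        · obtain ⟨w, hw, rfl⟩ := Finset.mem_image.mp h
          have hwD := (Finset.mem_inter.mp (Finset.mem_filter.mp hw).1).2
          exact ⟨Finset.mem_insert_of_mem hwD, Finset.mem_insert_self _ _⟩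
      · obtain ⟨w, hw, rfl⟩ := Finset.mem_image.mp h
        have hwD := (Finset.mem_inter.mp (Finset.mem_filter.mp hw).1).2
        exact ⟨Finset.mem_insert_self _ _, Finset.mem_insert_of_mem hwD⟩
    · cases out with
      | true =>
        simp only [if_true] at h
        obtain ⟨w, hw, rfl⟩ := Finset.mem_image.mp h
        have hwD := (Finset.mem_sdiff.mp (Finset.mem_filter.mp hw).1).1
        exact ⟨Finset.mem_insert_self _ _, Finset.mem_insert_of_mem hwD⟩
      | false =>
        simp only [Bool.false_eq_true, if_false] at h
        obtain ⟨w, hw, rfl⟩ := Finset.mem_image.mp h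
        have hwD := (Finset.mem_sdiff.mp (Finset.mem_filter.mp hw).1).1
        exact ⟨Finset.mem_insert_of_mem hwD, Finset.mem_insert_self _ _⟩
  no_loops := by
    intro e he
    rcases Finset.mem_union.mp he with h | h
    · rcases Finset.mem_union.mp h with h | h
      · rcases Finset.mem_union.mp h with h | h
        · exact D.no_loops e h
        · obtain ⟨w, hw, rfl⟩ := Finset.mem_image.mp h
          exact (Finset.mem_filter.mp hw).2
      · obtain ⟨w, hw, rfl⟩ := Finset.mem_image.mp h
        exact fun hvw => (Finset.mem_filter.mp hw).2 hvw.symm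
    · cases out with
      | true =>
        simp only [if_true] at h
        obtain ⟨w, hw, rfl⟩ := Finset.mem_image.mp h
        exact fun hvw => (Finset.mem_filter.mp hw).2 hvw.symm
      | false =>
        simp only [Bool.false_eq_true, if_false] at h
        obtain ⟨w, hw, rfl⟩ := Finset.mem_image.mp h
        exact (Finset.mem_filter.mp hw).2

/-- The recursively defined family of directed `m`-trees. -/
inductive IsDTree (m : ℕ) : Dgraph → Prop
  | base (S : Finset ℕ) (h : S.card = m) : IsDTree m (completeOn S)
  | grow (D : Dgraph) (hD : IsDTree m D) (v : ℕ) (hv : v ∉ D.verts)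
      (K : Finset ℕ) (hK : K ⊆ D.verts) (hKcard : K.card = m)
      (hKcomplete : (completeOn K).IsSubdigraph D) (out : Bool) :
      IsDTree m (D.extend v K out)

/-- `D` is a tournament: exactly one arc between any two distinct vertices. -/
def IsTournament (D : Dgraph) : Prop :=
  ∀ u ∈ D.verts, ∀ v ∈ D.verts, u ≠ v → ((u, v) ∈ D.arcs ↔ (v, u) ∉ D.arcs)

/-- `D` is acyclic: it has no directed cycle. -/
def Acyclic (D : Dgraph) : Prop :=
  ∀ v : ℕ, ¬ Relation.TransGen (fun a b => (a, b) ∈ D.arcs) v v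

end Dgraph

namespace Dgraph

open Finset

lemma ext' {G H : Dgraph} (hv : G.verts = H.verts) (ha : G.arcs = H.arcs) : G = H := by
  cases G; cases H; simp_all

@[simp] lemma delete_verts (D : Dgraph) (S : Finset ℕ) : (D.delete S).verts = D.verts \ S := rfl
@[simp] lemma induce_verts' (D : Dgraph) (S : Finset ℕ) : (D.induce S).verts = D.verts ∩ S := rfl
@[simp] lemma extend_verts (D : Dgraph) (v K out) : (D.extend v K out).verts = insert v D.verts := rfl
@[simp] lemma completeOn_verts (S : Finset ℕ) : (completeOn S).verts = S := rfl

@[simp] lemma mem_delete_arcs {D : Dgraph} {S : Finset ℕ} {e : ℕ × ℕ} :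
    e ∈ (D.delete S).arcs ↔ e ∈ D.arcs ∧ e.1 ∉ S ∧ e.2 ∉ S := by
  simp [delete]

@[simp] lemma mem_induce_arcs {D : Dgraph} {S : Finset ℕ} {e : ℕ × ℕ} :
    e ∈ (D.induce S).arcs ↔ e ∈ D.arcs ∧ e.1 ∈ S ∧ e.2 ∈ S := by
  simp [induce]

@[simp] lemma mem_completeOn_arcs {S : Finset ℕ} {e : ℕ × ℕ} :
    e ∈ (completeOn S).arcs ↔ e.1 ∈ S ∧ e.2 ∈ S ∧ e.1 ≠ e.2 := by
  simp [completeOn]; tauto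

lemma mem_extend_arcs {D : Dgraph} {v : ℕ} {K : Finset ℕ} {out : Bool}
    (hv : v ∉ D.verts) (hK : K ⊆ D.verts) {a b : ℕ} :
    (a, b) ∈ (D.extend v K out).arcs ↔ (a, b) ∈ D.arcs ∨ (a ∈ K ∧ b = v) ∨ (a = v ∧ b ∈ K)
      ∨ (out = true ∧ a = v ∧ b ∈ D.verts ∧ b ∉ K)
      ∨ (out = false ∧ b = v ∧ a ∈ D.verts ∧ a ∉ K) := by
  have hKD : K ∩ D.verts = K := Finset.inter_eq_left.mpr hK
  have hvK : ∀ w ∈ K, w ≠ v := fun w hw => fun h => hv (h ▸ hK hw)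
  cases out with
  | true =>
    simp only [extend, if_true, Finset.mem_union, Finset.mem_image, Finset.mem_filter, hKD,
      Finset.mem_sdiff, Prod.mk.injEq]
    constructor
    · rintro (((h | ⟨w, ⟨hw, _⟩, rfl, rfl⟩) | ⟨w, ⟨hw, _⟩, rfl, rfl⟩) | ⟨w, ⟨⟨hw1, hw2⟩, _⟩, rfl, rfl⟩)
      · exact Or.inl h
      · exact Or.inr (Or.inl ⟨hw, rfl⟩)
      · exact Or.inr (Or.inr (Or.inl ⟨rfl, hw⟩))
      · exact Or.inr (Or.inr (Or.inr (Or.inl ⟨trivial, rfl, hw1, hw2⟩)))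
    · rintro (h | ⟨ha, rfl⟩ | ⟨rfl, hb⟩ | ⟨_, rfl, hb1, hb2⟩ | ⟨h, _⟩)
      · exact Or.inl (Or.inl (Or.inl h))
      · exact Or.inl (Or.inl (Or.inr ⟨a, ⟨ha, hvK a ha⟩, rfl, rfl⟩))
      · exact Or.inl (Or.inr ⟨b, ⟨hb, hvK b hb⟩, rfl, rfl⟩)
      · exact Or.inr ⟨b, ⟨⟨hb1, hb2⟩, fun h => hv (h ▸ hb1)⟩, rfl, rfl⟩
      · simp at h
  | false =>
    simp only [extend, Bool.false_eq_true, if_false, Finset.mem_union, Finset.mem_image,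
      Finset.mem_filter, hKD, Finset.mem_sdiff, Prod.mk.injEq]
    constructor
    · rintro (((h | ⟨w, ⟨hw, _⟩, rfl, rfl⟩) | ⟨w, ⟨hw, _⟩, rfl, rfl⟩) | ⟨w, ⟨⟨hw1, hw2⟩, _⟩, rfl, rfl⟩)
      · exact Or.inl h
      · exact Or.inr (Or.inl ⟨hw, rfl⟩)
      · exact Or.inr (Or.inr (Or.inl ⟨rfl, hw⟩))
      · exact Or.inr (Or.inr (Or.inr (Or.inr ⟨trivial, rfl, hw1, hw2⟩)))
    · rintro (h | ⟨ha, rfl⟩ | ⟨rfl, hb⟩ | ⟨h, _⟩ | ⟨_, rfl, ha1, ha2⟩)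
      · exact Or.inl (Or.inl (Or.inl h))
      · exact Or.inl (Or.inl (Or.inr ⟨a, ⟨ha, hvK a ha⟩, rfl, rfl⟩))
      · exact Or.inl (Or.inr ⟨b, ⟨hb, hvK b hb⟩, rfl, rfl⟩)
      · simp at h
      · exact Or.inr ⟨a, ⟨⟨ha1, ha2⟩, fun h => hv (h ▸ ha1)⟩, rfl, rfl⟩

lemma arcs_subset_extend (D : Dgraph) (v K out) : D.arcs ⊆ (D.extend v K out).arcs := by
  intro e he
  simp only [extend, Finset.mem_union]
  exact Or.inl (Or.inl (Or.inl he))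

lemma reach_mono {H G : Dgraph} (h : H.arcs ⊆ G.arcs) {u w : ℕ} (hr : H.Reach u w) :
    G.Reach u w :=
  Relation.ReflTransGen.mono (fun a b hab => h hab) u w hr

lemma sc_mono {H G : Dgraph} (hv : H.verts = G.verts) (ha : H.arcs ⊆ G.arcs)
    (h : StronglyConnected H) : StronglyConnected G := by
  intro u hu w hw
  exact reach_mono ha (h u (hv ▸ hu) w (hv ▸ hw))

lemma completeOn_sc (S : Finset ℕ) : StronglyConnected (completeOn S) := by
  intro u hu w hw
  rcases eq_or_ne u w with rfl | h
  · exact Relation.ReflTransGen.refl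
  · exact Relation.ReflTransGen.single (by simp at hu hw ⊢; exact ⟨hu, hw, h⟩)

lemma induce_of_subset {D : Dgraph} {T : Finset ℕ} (h : D.verts ⊆ T) : D.induce T = D := by
  refine ext' ?_ ?_
  · exact Finset.inter_eq_left.mpr h
  · ext e
    simp only [mem_induce_arcs, and_iff_left_iff_imp]
    intro he
    exact ⟨h (D.arcs_mem e he).1, h (D.arcs_mem e he).2⟩

lemma induce_completeOn_sub {D : Dgraph} {K : Finset ℕ} (hK : K ⊆ D.verts)
    (hc : (completeOn K).IsSubdigraph D) : D.induce K = completeOn K := by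
  refine ext' ?_ ?_
  · exact Finset.inter_eq_right.mpr hK
  · ext e
    simp only [mem_induce_arcs, mem_completeOn_arcs]
    constructor
    · rintro ⟨he, h1, h2⟩
      exact ⟨h1, h2, D.no_loops e he⟩
    · rintro ⟨h1, h2, h3⟩
      exact ⟨hc.2 (by simp [h1, h2, h3]), h1, h2⟩

lemma reach_no_in {G : Dgraph} {v : ℕ} (h : ∀ w, (w, v) ∉ G.arcs) {x : ℕ}
    (hr : G.Reach x v) : x = v := by
  induction hr with
  | refl => rfl
  | tail _ hlast _ => exact absurd hlast (h _)

lemma reach_no_out {G : Dgraph} {v : ℕ} (h : ∀ w, (v, w) ∉ G.arcs) {x : ℕ}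
    (hr : G.Reach v x) : v = x := by
  rcases (Relation.ReflTransGen.cases_head hr) with rfl | ⟨c, hc, _⟩
  · rfl
  · exact absurd hc (h _)

lemma sc_union {G : Dgraph} {X Y : Finset ℕ} (z : ℕ) (hzX : z ∈ X) (hzY : z ∈ Y)
    (hzG : z ∈ G.verts)
    (hX : StronglyConnected (G.induce X)) (hY : StronglyConnected (G.induce Y)) :
    StronglyConnected (G.induce (X ∪ Y)) := by
  have hmonoX : (G.induce X).arcs ⊆ (G.induce (X ∪ Y)).arcs := by
    intro e he; simp only [mem_induce_arcs, Finset.mem_union] at he ⊢; tauto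
  have hmonoY : (G.induce Y).arcs ⊆ (G.induce (X ∪ Y)).arcs := by
    intro e he; simp only [mem_induce_arcs, Finset.mem_union] at he ⊢; tauto
  have key : ∀ u ∈ (G.induce (X ∪ Y)).verts, (G.induce (X ∪ Y)).Reach u z ∧
      (G.induce (X ∪ Y)).Reach z u := by
    intro u hu
    simp only [induce_verts', Finset.mem_inter, Finset.mem_union] at hu
    rcases hu.2 with h | h
    · exact ⟨reach_mono hmonoX (hX u (by simp [hu.1, h]) z (by simp [hzG, hzX])),
        reach_mono hmonoX (hX z (by simp [hzG, hzX]) u (by simp [hu.1, h]))⟩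
    · exact ⟨reach_mono hmonoY (hY u (by simp [hu.1, h]) z (by simp [hzG, hzY])),
        reach_mono hmonoY (hY z (by simp [hzG, hzY]) u (by simp [hu.1, h]))⟩
  intro u hu w hw
  exact Relation.ReflTransGen.trans (key u hu).1 (key w hw).2

end Dgraph

namespace Dgraph
open Finset

lemma exists_component {G : Dgraph} {x : ℕ} (hx : x ∈ G.verts) :
    ∃ B, G.IsStrongComponent B ∧ x ∈ B := by
  classical
  set cand := G.verts.powerset.filter (fun B => x ∈ B ∧ StronglyConnected (G.induce B)) with hcand
  have hxcand : {x} ∈ cand := by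
    simp only [hcand, mem_filter, mem_powerset]
    refine ⟨by simpa using hx, by simp, ?_⟩
    intro u hu w hw
    simp only [induce_verts', mem_inter, mem_singleton] at hu hw
    rw [hu.2, hw.2]
    exact Relation.ReflTransGen.refl
  obtain ⟨B, hBc, hBmax⟩ := Finset.exists_max_image cand Finset.card ⟨_, hxcand⟩
  simp only [hcand, mem_filter, mem_powerset] at hBc
  refine ⟨B, ⟨hBc.1, ⟨x, hBc.2.1⟩, hBc.2.2, ?_⟩, hBc.2.1⟩
  intro B' hBB' hB'v hB'sc
  refine (Finset.eq_of_subset_of_card_le hBB' ?_).symm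
  refine hBmax B' ?_
  simp only [hcand, mem_filter, mem_powerset]
  exact ⟨hB'v, hBB' hBc.2.1, hB'sc⟩

lemma subset_component {G : Dgraph} {B X : Finset ℕ} (hB : G.IsStrongComponent B)
    {x : ℕ} (hxB : x ∈ B) (hxX : x ∈ X) (hXv : X ⊆ G.verts)
    (hX : StronglyConnected (G.induce X)) : X ⊆ B := by
  have hBX : StronglyConnected (G.induce (B ∪ X)) :=
    sc_union x hxB hxX (hB.1 hxB) hB.2.2.1 hX
  have heq := hB.2.2.2 (B ∪ X) Finset.subset_union_left (Finset.union_subset hB.1 hXv) hBX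
  intro y hy; rw [← heq]; exact Finset.mem_union_right _ hy

lemma component_eq {G : Dgraph} {B B' : Finset ℕ} (hB : G.IsStrongComponent B)
    (hB' : G.IsStrongComponent B') {x : ℕ} (hx : x ∈ B) (hx' : x ∈ B') : B = B' :=
  Finset.Subset.antisymm (subset_component hB' hx' hx hB.1 hB.2.2.1)
    (subset_component hB hx hx' hB'.1 hB'.2.2.1)

lemma dtree_card {m : ℕ} {D : Dgraph} (hD : IsDTree m D) : m ≤ D.verts.card := by
  induction hD with
  | base S h => simp [h]
  | grow D hD v hv K hK hKcard hKcomp out ih =>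
    simp only [extend_verts]
    rw [Finset.card_insert_of_notMem hv]; omega

lemma dtree_delete_sc {m : ℕ} {D : Dgraph} (hD : IsDTree m D) :
    ∀ T : Finset ℕ, T.card < m → StronglyConnected (D.delete T) := by
  induction hD with
  | base S hS =>
    intro T hT u hu w hw
    simp only [delete_verts, completeOn_verts, mem_sdiff] at hu hw
    rcases eq_or_ne u w with rfl | h
    · exact Relation.ReflTransGen.refl
    · refine Relation.ReflTransGen.single ?_
      simp only [mem_delete_arcs, mem_completeOn_arcs]
      exact ⟨⟨hu.1, hw.1, h⟩, hu.2, hw.2⟩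
  | grow D hD v hv K hK hKcard hKcomp out ih =>
    intro T hT
    obtain ⟨k₀, hk₀⟩ : (K \ T).Nonempty := by
      rw [Finset.sdiff_nonempty]
      intro hKT
      have := Finset.card_le_card hKT; omega
    rw [Finset.mem_sdiff] at hk₀
    have hDel : (D.delete T).arcs ⊆ ((D.extend v K out).delete T).arcs := by
      intro e he
      simp only [mem_delete_arcs] at he ⊢
      exact ⟨arcs_subset_extend _ _ _ _ he.1, he.2⟩
    have hk₀' : k₀ ∈ (D.delete T).verts := by
      simp only [delete_verts, Finset.mem_sdiff]
      exact ⟨hK hk₀.1, hk₀.2⟩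
    have reach_from_v : ∀ x, x ∈ D.verts → x ∉ T → v ∉ T →
        ((D.extend v K out).delete T).Reach v x := by
      intro x hx hxT hvT
      have step : ((D.extend v K out).delete T).Reach v k₀ := Relation.ReflTransGen.single (by
        simp only [mem_delete_arcs]
        exact ⟨(mem_extend_arcs hv hK).mpr (Or.inr (Or.inr (Or.inl ⟨rfl, hk₀.1⟩))), hvT, hk₀.2⟩)
      refine step.trans (reach_mono hDel (ih T hT k₀ hk₀' x ?_))
      simp only [delete_verts, Finset.mem_sdiff]; exact ⟨hx, hxT⟩
    have reach_to_v : ∀ x, x ∈ D.verts → x ∉ T → v ∉ T →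
        ((D.extend v K out).delete T).Reach x v := by
      intro x hx hxT hvT
      have step : ((D.extend v K out).delete T).Reach k₀ v := Relation.ReflTransGen.single (by
        simp only [mem_delete_arcs]
        exact ⟨(mem_extend_arcs hv hK).mpr (Or.inr (Or.inl ⟨hk₀.1, rfl⟩)), hk₀.2, hvT⟩)
      refine (reach_mono hDel (ih T hT x ?_ k₀ hk₀')).trans step
      simp only [delete_verts, Finset.mem_sdiff]; exact ⟨hx, hxT⟩
    intro u hu w hw
    simp only [delete_verts, extend_verts, Finset.mem_sdiff, Finset.mem_insert] at hu hw
    rcases hu.1 with rfl | hu1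
    · rcases hw.1 with rfl | hw1
      · exact Relation.ReflTransGen.refl
      · exact reach_from_v w hw1 hw.2 hu.2
    · rcases hw.1 with rfl | hw1
      · exact reach_to_v u hu1 hu.2 hw.2
      · refine reach_mono hDel (ih T hT u ?_ w ?_) <;>
          simp only [delete_verts, Finset.mem_sdiff]
        · exact ⟨hu1, hu.2⟩
        · exact ⟨hw1, hw.2⟩

lemma extend_induce_of_not_mem {D : Dgraph} {v : ℕ} {K : Finset ℕ} {out : Bool}
    (hv : v ∉ D.verts) (hK : K ⊆ D.verts) {T : Finset ℕ} (hvT : v ∉ T) :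
    (D.extend v K out).induce T = D.induce T := by
  refine ext' ?_ ?_
  · ext x
    simp only [induce_verts', extend_verts, mem_inter, mem_insert]
    constructor
    · rintro ⟨rfl | hx, hxT⟩
      · exact absurd hxT hvT
      · exact ⟨hx, hxT⟩
    · rintro ⟨hx, hxT⟩; exact ⟨Or.inr hx, hxT⟩
  · ext ⟨a, b⟩
    simp only [mem_induce_arcs]
    constructor
    · rintro ⟨he, ha, hb⟩
      rcases (mem_extend_arcs hv hK).mp he with h | ⟨_, rfl⟩ | ⟨rfl, _⟩ | ⟨_, rfl, _⟩ | ⟨_, rfl, _⟩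
      · exact ⟨h, ha, hb⟩
      · exact absurd hb hvT
      · exact absurd ha hvT
      · exact absurd ha hvT
      · exact absurd hb hvT
    · rintro ⟨he, ha, hb⟩
      exact ⟨arcs_subset_extend _ _ _ _ he, ha, hb⟩

lemma extend_induce_of_mem {D : Dgraph} {v : ℕ} {K : Finset ℕ} {out : Bool}
    (hv : v ∉ D.verts) (hK : K ⊆ D.verts) {T : Finset ℕ} (hvT : v ∈ T)
    (hKT : K ⊆ T.erase v) :
    (D.extend v K out).induce T = (D.induce (T.erase v)).extend v K out := by
  have hv' : v ∉ (D.induce (T.erase v)).verts := by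
    simp only [induce_verts', mem_inter]
    exact fun h => hv h.1
  have hK' : K ⊆ (D.induce (T.erase v)).verts := by
    intro w hw
    simp only [induce_verts', mem_inter]
    exact ⟨hK hw, hKT hw⟩
  refine ext' ?_ ?_
  · ext x
    simp only [induce_verts', extend_verts, mem_inter, mem_insert, mem_erase]
    constructor
    · rintro ⟨rfl | hx, hxT⟩
      · exact Or.inl rfl
      · exact Or.inr ⟨hx, fun h => hv (h ▸ hx), hxT⟩
    · rintro (rfl | ⟨hx, _, hxT⟩)
      · exact ⟨Or.inl rfl, hvT⟩
      · exact ⟨Or.inr hx, hxT⟩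
  · ext ⟨a, b⟩
    simp only [mem_induce_arcs]
    constructor
    · rintro ⟨he, haT, hbT⟩
      rw [mem_extend_arcs hv' hK']
      rcases (mem_extend_arcs hv hK).mp he with h | h | h | ⟨ho, rfl, hb1, hb2⟩ | ⟨ho, rfl, ha1, ha2⟩
      · refine Or.inl ?_
        rw [mem_induce_arcs]
        refine ⟨h, ?_, ?_⟩
        · exact Finset.mem_erase.mpr ⟨fun hh => hv (hh ▸ (D.arcs_mem _ h).1), haT⟩
        · exact Finset.mem_erase.mpr ⟨fun hh => hv (hh ▸ (D.arcs_mem _ h).2), hbT⟩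
      · exact Or.inr (Or.inl h)
      · exact Or.inr (Or.inr (Or.inl h))
      · refine Or.inr (Or.inr (Or.inr (Or.inl ⟨ho, rfl, ?_, hb2⟩)))
        simp only [induce_verts', mem_inter, mem_erase]
        exact ⟨hb1, ⟨fun hh => hv (hh ▸ hb1), hbT⟩⟩
      · refine Or.inr (Or.inr (Or.inr (Or.inr ⟨ho, rfl, ?_, ha2⟩)))
        simp only [induce_verts', mem_inter, mem_erase]
        exact ⟨ha1, ⟨fun hh => hv (hh ▸ ha1), haT⟩⟩
    · intro h
      rcases (mem_extend_arcs hv' hK').mp h with h | ⟨haK, rfl⟩ | ⟨rfl, hbK⟩ | ⟨ho, rfl, hb, hbK⟩ | ⟨ho, rfl, ha, haK⟩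
      · rw [mem_induce_arcs] at h
        exact ⟨arcs_subset_extend _ _ _ _ h.1, Finset.mem_of_mem_erase h.2.1,
          Finset.mem_of_mem_erase h.2.2⟩
      · exact ⟨(mem_extend_arcs hv hK).mpr (Or.inr (Or.inl ⟨haK, rfl⟩)),
          Finset.mem_of_mem_erase (hKT haK), hvT⟩
      · exact ⟨(mem_extend_arcs hv hK).mpr (Or.inr (Or.inr (Or.inl ⟨rfl, hbK⟩))), hvT,
          Finset.mem_of_mem_erase (hKT hbK)⟩
      · simp only [induce_verts', mem_inter, mem_erase] at hb
        exact ⟨(mem_extend_arcs hv hK).mpr (Or.inr (Or.inr (Or.inr (Or.inl ⟨ho, rfl, hb.1, hbK⟩)))),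
          hvT, hb.2.2⟩
      · simp only [induce_verts', mem_inter, mem_erase] at ha
        exact ⟨(mem_extend_arcs hv hK).mpr (Or.inr (Or.inr (Or.inr (Or.inr ⟨ho, rfl, ha.1, haK⟩)))),
          ha.2.2, hvT⟩

end Dgraph

namespace Dgraph
open Finset

lemma delete_induce_eq {D : Dgraph} {v : ℕ} {K : Finset ℕ} {out : Bool}
    (hv : v ∉ D.verts) (hK : K ⊆ D.verts) {S B : Finset ℕ} (hvB : v ∉ B) :
    ((D.extend v K out).delete S).induce B = (D.delete S).induce B := by
  refine ext' ?_ ?_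
  · ext x
    simp only [induce_verts', delete_verts, extend_verts, mem_inter, mem_sdiff, mem_insert]
    constructor
    · rintro ⟨⟨rfl | hx, hxS⟩, hxB⟩
      · exact absurd hxB hvB
      · exact ⟨⟨hx, hxS⟩, hxB⟩
    · rintro ⟨⟨hx, hxS⟩, hxB⟩
      exact ⟨⟨Or.inr hx, hxS⟩, hxB⟩
  · ext ⟨a, b⟩
    simp only [mem_induce_arcs, mem_delete_arcs]
    constructor
    · rintro ⟨⟨he, hS⟩, ha, hb⟩
      rcases (mem_extend_arcs hv hK).mp he with h | ⟨_, rfl⟩ | ⟨rfl, _⟩ | ⟨_, rfl, _⟩ | ⟨_, rfl, _⟩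
      · exact ⟨⟨h, hS⟩, ha, hb⟩
      · exact absurd hb hvB
      · exact absurd ha hvB
      · exact absurd ha hvB
      · exact absurd hb hvB
    · rintro ⟨⟨he, hS⟩, ha, hb⟩
      exact ⟨⟨arcs_subset_extend _ _ _ _ he, hS⟩, ha, hb⟩

lemma comp_transfer {D : Dgraph} {v : ℕ} {K : Finset ℕ} {out : Bool}
    (hv : v ∉ D.verts) (hK : K ⊆ D.verts) {S B : Finset ℕ} (hvB : v ∉ B)
    (hB : ((D.extend v K out).delete S).IsStrongComponent B) :
    (D.delete S).IsStrongComponent B := by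
  obtain ⟨hB1, hB2, hB3, hB4⟩ := hB
  have hBsub : B ⊆ (D.delete S).verts := by
    intro x hx
    have hh := hB1 hx
    simp only [delete_verts, extend_verts, mem_sdiff, mem_insert] at hh
    simp only [delete_verts, mem_sdiff]
    rcases hh.1 with rfl | h
    · exact absurd hx hvB
    · exact ⟨h, hh.2⟩
  refine ⟨hBsub, hB2, ?_, ?_⟩
  · rw [← delete_induce_eq hv hK hvB]; exact hB3
  · intro B' hBB' hB'v hB'sc
    refine hB4 B' hBB' ?_ ?_
    · intro x hx
      have hh := hB'v hx
      simp only [delete_verts, mem_sdiff] at hh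
      simp only [delete_verts, extend_verts, mem_sdiff, mem_insert]
      exact ⟨Or.inr hh.1, hh.2⟩
    · refine sc_mono (H := (D.delete S).induce B') ?_ ?_ hB'sc
      · ext x
        simp only [induce_verts', delete_verts, extend_verts, mem_inter, mem_sdiff, mem_insert]
        constructor
        · rintro ⟨⟨hx, hxS⟩, hxB⟩; exact ⟨⟨Or.inr hx, hxS⟩, hxB⟩
        · rintro ⟨⟨rfl | hx, hxS⟩, hxB⟩
          · have hh := hB'v hxB
            simp only [delete_verts, mem_sdiff] at hh
            exact ⟨⟨hh.1, hxS⟩, hxB⟩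
          · exact ⟨⟨hx, hxS⟩, hxB⟩
      · intro e he
        simp only [mem_induce_arcs, mem_delete_arcs] at he ⊢
        exact ⟨⟨arcs_subset_extend _ _ _ _ he.1.1, he.1.2⟩, he.2⟩

lemma extend_delete_of_mem {D : Dgraph} {v : ℕ} {K : Finset ℕ} {out : Bool}
    (hv : v ∉ D.verts) (hK : K ⊆ D.verts) {S : Finset ℕ} (hvS : v ∈ S) :
    (D.extend v K out).delete S = D.delete (S.erase v) := by
  refine ext' ?_ ?_
  · ext x
    simp only [delete_verts, extend_verts, mem_sdiff, mem_insert, mem_erase]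
    constructor
    · rintro ⟨rfl | hx, hxS⟩
      · exact absurd hvS hxS
      · exact ⟨hx, fun h => hxS h.2⟩
    · rintro ⟨hx, hxS⟩
      refine ⟨Or.inr hx, fun h => hxS ⟨fun hh => hv (hh ▸ hx), h⟩⟩
  · ext ⟨a, b⟩
    simp only [mem_delete_arcs, mem_erase]
    constructor
    · rintro ⟨he, ha, hb⟩
      rcases (mem_extend_arcs hv hK).mp he with h | ⟨_, rfl⟩ | ⟨rfl, _⟩ | ⟨_, rfl, _⟩ | ⟨_, rfl, _⟩
      · exact ⟨h, fun hh => ha hh.2, fun hh => hb hh.2⟩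
      · exact absurd hvS hb
      · exact absurd hvS ha
      · exact absurd hvS ha
      · exact absurd hvS hb
    · rintro ⟨he, ha, hb⟩
      have haV := (D.arcs_mem _ he).1
      have hbV := (D.arcs_mem _ he).2
      exact ⟨arcs_subset_extend _ _ _ _ he,
        fun hh => ha ⟨fun h2 => hv (h2 ▸ haV), hh⟩,
        fun hh => hb ⟨fun h2 => hv (h2 ▸ hbV), hh⟩⟩

lemma extend_delete_no_in {D : Dgraph} {v : ℕ} {K : Finset ℕ}
    (hv : v ∉ D.verts) (hK : K ⊆ D.verts) {S : Finset ℕ} (hKS : K ⊆ S) :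
    ∀ w, (w, v) ∉ ((D.extend v K true).delete S).arcs := by
  intro w hw
  simp only [mem_delete_arcs] at hw
  rcases (mem_extend_arcs hv hK).mp hw.1 with h | ⟨hwK, _⟩ | ⟨rfl, hvK⟩ | ⟨_, _, hvV, _⟩ | ⟨h, _⟩
  · exact hv (D.arcs_mem _ h).2
  · exact hw.2.1 (hKS hwK)
  · exact hv (hK hvK)
  · exact hv hvV
  · simp at h

lemma extend_delete_no_out {D : Dgraph} {v : ℕ} {K : Finset ℕ}
    (hv : v ∉ D.verts) (hK : K ⊆ D.verts) {S : Finset ℕ} (hKS : K ⊆ S) :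
    ∀ w, (v, w) ∉ ((D.extend v K false).delete S).arcs := by
  intro w hw
  simp only [mem_delete_arcs] at hw
  rcases (mem_extend_arcs hv hK).mp hw.1 with h | ⟨hvK, _⟩ | ⟨_, hwK⟩ | ⟨h, _⟩ | ⟨_, _, hvV, _⟩
  · exact hv (D.arcs_mem _ h).1
  · exact hv (hK hvK)
  · exact hw.2.2 (hKS hwK)
  · simp at h
  · exact hv hvV

lemma extend_delete_not_sc {D : Dgraph} {v : ℕ} {K : Finset ℕ} {out : Bool}
    (hv : v ∉ D.verts) (hK : K ⊆ D.verts) {S : Finset ℕ} (hKS : K ⊆ S) (hvS : v ∉ S)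
    (hcard : 2 ≤ ((D.extend v K out).delete S).verts.card) :
    ¬ StronglyConnected ((D.extend v K out).delete S) := by
  intro hsc
  have hvmem : v ∈ ((D.extend v K out).delete S).verts := by
    rw [delete_verts, extend_verts]
    exact Finset.mem_sdiff.mpr ⟨Finset.mem_insert_self _ _, hvS⟩
  obtain ⟨u, hu, huv⟩ := Finset.exists_mem_ne
    (s := ((D.extend v K out).delete S).verts) (by omega) v
  cases out with
  | true =>
    have := reach_no_in (G := (D.extend v K true).delete S)
      (extend_delete_no_in hv hK hKS) (hsc u hu v hvmem)
    exact huv this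
  | false =>
    have := reach_no_out (G := (D.extend v K false).delete S)
      (extend_delete_no_out hv hK hKS) (hsc v hvmem u hu)
    exact huv this.symm

lemma extend_delete_sc {D : Dgraph} {v : ℕ} {K : Finset ℕ} {out : Bool}
    (hv : v ∉ D.verts) (hK : K ⊆ D.verts) {S : Finset ℕ} (hvS : v ∉ S)
    {k₀ : ℕ} (hk₀K : k₀ ∈ K) (hk₀S : k₀ ∉ S)
    (hsc : StronglyConnected (D.delete S)) :
    StronglyConnected ((D.extend v K out).delete S) := by
  have hDel : (D.delete S).arcs ⊆ ((D.extend v K out).delete S).arcs := by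
    intro e he
    simp only [mem_delete_arcs] at he ⊢
    exact ⟨arcs_subset_extend _ _ _ _ he.1, he.2⟩
  have hk₀' : k₀ ∈ (D.delete S).verts := by
    simp only [delete_verts, Finset.mem_sdiff]
    exact ⟨hK hk₀K, hk₀S⟩
  intro u hu w hw
  simp only [delete_verts, extend_verts, Finset.mem_sdiff, Finset.mem_insert] at hu hw
  have stepvk : ((D.extend v K out).delete S).Reach v k₀ := Relation.ReflTransGen.single (by
    simp only [mem_delete_arcs]
    exact ⟨(mem_extend_arcs hv hK).mpr (Or.inr (Or.inr (Or.inl ⟨rfl, hk₀K⟩))), hvS, hk₀S⟩)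
  have stepkv : ((D.extend v K out).delete S).Reach k₀ v := Relation.ReflTransGen.single (by
    simp only [mem_delete_arcs]
    exact ⟨(mem_extend_arcs hv hK).mpr (Or.inr (Or.inl ⟨hk₀K, rfl⟩)), hk₀S, hvS⟩)
  rcases hu.1 with rfl | hu1
  · rcases hw.1 with rfl | hw1
    · exact Relation.ReflTransGen.refl
    · refine stepvk.trans (reach_mono hDel (hsc k₀ hk₀' w ?_))
      simp only [delete_verts, Finset.mem_sdiff]; exact ⟨hw1, hw.2⟩
  · rcases hw.1 with rfl | hw1
    · refine (reach_mono hDel (hsc u ?_ k₀ hk₀')).trans stepkv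
      simp only [delete_verts, Finset.mem_sdiff]; exact ⟨hu1, hu.2⟩
    · refine reach_mono hDel (hsc u ?_ w ?_) <;>
        simp only [delete_verts, Finset.mem_sdiff]
      · exact ⟨hu1, hu.2⟩
      · exact ⟨hw1, hw.2⟩

end Dgraph

namespace Dgraph
open Finset

lemma dtree_main (m : ℕ) (hm1 : 1 ≤ m) (D : Dgraph) (hD : IsDTree m D) :
    m + 1 ≤ D.verts.card →
    ∀ S : Finset ℕ, D.IsMinSeparator S →
    ∀ 𝓑 : Finset (Finset ℕ), 𝓑.Nonempty →
      (∀ B ∈ 𝓑, (D.delete S).IsStrongComponent B) →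
      IsDTree m (D.induce (S ∪ 𝓑.biUnion id)) := by
  induction hD with
  | base S₀ h₀ =>
    intro hcard
    rw [completeOn_verts, h₀] at hcard
    omega
  | grow D hD v hv K hK hKcard hKcomp out ih =>
    intro hcard S hS 𝓑 hBne hBcomp
    classical
    have hcardE : (D.extend v K out).verts.card = D.verts.card + 1 := by
      rw [extend_verts, Finset.card_insert_of_notMem hv]
    have hmV : m ≤ D.verts.card := dtree_card hD
    have hSsub : S ⊆ (D.extend v K out).verts := hS.1.1
    rcases eq_or_lt_of_le hmV with hsmall | hbig
    -- ===== CASE 1 : D has exactly m vertices, whole graph is complete on m+1 =====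
    · have hKV : K = D.verts := Finset.eq_of_subset_of_card_le hK (by omega)
      have hall : ∀ a ∈ (D.extend v K out).verts, ∀ b ∈ (D.extend v K out).verts,
          a ≠ b → (a, b) ∈ (D.extend v K out).arcs := by
        intro a ha b hb hab
        rw [extend_verts, Finset.mem_insert] at ha hb
        rcases ha with rfl | ha
        · rcases hb with rfl | hb
          · exact absurd rfl hab
          · exact (mem_extend_arcs hv hK).mpr (Or.inr (Or.inr (Or.inl ⟨rfl, by rw [hKV]; exact hb⟩)))
        · rcases hb with rfl | hb
          · exact (mem_extend_arcs hv hK).mpr (Or.inr (Or.inl ⟨by rw [hKV]; exact ha, rfl⟩))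
          · refine arcs_subset_extend _ _ _ _ (hKcomp.2 ?_)
            rw [mem_completeOn_arcs]
            exact ⟨by rw [hKV]; exact ha, by rw [hKV]; exact hb, hab⟩
      have hscT : ∀ T : Finset ℕ, StronglyConnected ((D.extend v K out).delete T) := by
        intro T u hu w hw
        rw [delete_verts, Finset.mem_sdiff] at hu hw
        rcases eq_or_ne u w with rfl | huw
        · exact Relation.ReflTransGen.refl
        · refine Relation.ReflTransGen.single ?_
          rw [mem_delete_arcs]
          exact ⟨hall u hu.1 w hw.1 huw, hu.2, hw.2⟩
      have hsep : (D.extend v K out).IsSeparator D.verts := by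
        refine ⟨by rw [extend_verts]; exact Finset.subset_insert _ _, Or.inr ?_⟩
        rw [delete_verts, extend_verts]
        refine le_trans (Finset.card_le_card (fun x hx => ?_)) (le_of_eq (Finset.card_singleton v))
        rw [Finset.mem_sdiff, Finset.mem_insert] at hx
        rcases hx.1 with rfl | h
        · exact Finset.mem_singleton_self _
        · exact absurd h hx.2
      have hSle : S.card ≤ D.verts.card := hS.2 _ hsep
      have hdel1 : ((D.extend v K out).delete S).verts.card ≤ 1 := by
        rcases hS.1.2 with h | h
        · exact absurd (hscT S) h
        · exact h
      have hcardDel : ((D.extend v K out).delete S).verts.card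
          = (D.extend v K out).verts.card - S.card := by
        rw [delete_verts, Finset.card_sdiff_of_subset hSsub]
      obtain ⟨z, hz⟩ : ∃ z, ((D.extend v K out).delete S).verts = {z} :=
        Finset.card_eq_one.mp (by omega)
      have hvertsub : (D.extend v K out).verts ⊆ S ∪ 𝓑.biUnion id := by
        intro x hx
        rw [Finset.mem_union]
        by_cases hxS : x ∈ S
        · exact Or.inl hxS
        · right
          obtain ⟨B₀, hB₀⟩ := hBne
          have hB := hBcomp B₀ hB₀
          have hxz : x ∈ ({z} : Finset ℕ) := by
            rw [← hz, delete_verts, Finset.mem_sdiff]; exact ⟨hx, hxS⟩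
          have hzB : z ∈ B₀ := by
            obtain ⟨y, hy⟩ := hB.2.1
            have hyz := hB.1 hy
            rw [hz, Finset.mem_singleton] at hyz
            rwa [← hyz]
          rw [Finset.mem_singleton] at hxz
          subst hxz
          exact Finset.mem_biUnion.mpr ⟨B₀, hB₀, hzB⟩
      rw [induce_of_subset hvertsub]
      exact IsDTree.grow D hD v hv K hK hKcard hKcomp out
    -- ===== CASE 2 : D has at least m+1 vertices =====
    · have hbig' : m + 1 ≤ D.verts.card := hbig
      have hED : IsDTree m (D.extend v K out) := IsDTree.grow D hD v hv K hK hKcard hKcomp out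
      have hKsubE : K ⊆ (D.extend v K out).verts := by
        intro x hx; rw [extend_verts]; exact Finset.mem_insert_of_mem (hK hx)
      have hsepK : (D.extend v K out).IsSeparator K := by
        refine ⟨hKsubE, Or.inl ?_⟩
        refine extend_delete_not_sc hv hK (Finset.Subset.refl K) (fun h => hv (hK h)) ?_
        rw [delete_verts, Finset.card_sdiff_of_subset hKsubE]
        omega
      have hSleM : S.card ≤ m := by
        have := hS.2 K hsepK; omega
      have hSgeM : m ≤ S.card := by
        by_contra hlt
        push_neg at hlt
        have hsc := dtree_delete_sc hED S hlt
        rcases hS.1.2 with h | h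
        · exact h hsc
        · rw [delete_verts, Finset.card_sdiff_of_subset hSsub] at h
          omega
      have hScard : S.card = m := le_antisymm hSleM hSgeM
      have hnotSC : ¬ StronglyConnected ((D.extend v K out).delete S) := by
        rcases hS.1.2 with h | h
        · exact h
        · exfalso
          rw [delete_verts, Finset.card_sdiff_of_subset hSsub] at h
          omega
      have hvS : v ∉ S := by
        intro hvS
        apply hnotSC
        rw [extend_delete_of_mem hv hK hvS]
        refine dtree_delete_sc hD (S.erase v) ?_
        rw [Finset.card_erase_of_mem hvS]
        omega
      have hSV : S ⊆ D.verts := by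
        intro x hx
        have hh := hSsub hx
        rw [extend_verts, Finset.mem_insert] at hh
        rcases hh with rfl | h
        · exact absurd hx hvS
        · exact h
      by_cases hDSC : StronglyConnected (D.delete S)
      -- ===== CASE 2a : D - S is strongly connected =====
      · have hKS : K ⊆ S := by
          by_contra hKSc
          obtain ⟨w, hwK, hwS⟩ : ∃ w ∈ K, w ∉ S := by
            by_contra h; push_neg at h; exact hKSc h
          exact hnotSC (extend_delete_sc hv hK hvS hwK hwS hDSC)
        have hKSeq : K = S := Finset.eq_of_subset_of_card_le hKS (by omega)
        have hWsc : StronglyConnected ((D.delete S).induce (D.delete S).verts) := by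
          rw [induce_of_subset (Finset.Subset.refl _)]; exact hDSC
        have hcompcases : ∀ B ∈ 𝓑, B = {v} ∨ B = (D.delete S).verts := by
          intro B hB
          have hBc := hBcomp B hB
          by_cases hvB : v ∈ B
          · left
            refine Finset.Subset.antisymm ?_ (Finset.singleton_subset_iff.mpr hvB)
            intro x hxB
            rw [Finset.mem_singleton]
            have hxmem : x ∈ (((D.extend v K out).delete S).induce B).verts := by
              rw [induce_verts', Finset.mem_inter]; exact ⟨hBc.1 hxB, hxB⟩
            have hvmem : v ∈ (((D.extend v K out).delete S).induce B).verts := by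
              rw [induce_verts', Finset.mem_inter]; exact ⟨hBc.1 hvB, hvB⟩
            cases out with
            | true =>
              exact reach_no_in
                (fun w hw => extend_delete_no_in hv hK hKS w (mem_induce_arcs.mp hw).1)
                (hBc.2.2.1 x hxmem v hvmem)
            | false =>
              exact (reach_no_out
                (fun w hw => extend_delete_no_out hv hK hKS w (mem_induce_arcs.mp hw).1)
                (hBc.2.2.1 v hvmem x hxmem)).symm
          · right
            have hBD := comp_transfer hv hK hvB hBc
            exact (hBD.2.2.2 (D.delete S).verts hBD.1 (Finset.Subset.refl _) hWsc).symm
        by_cases hvU : v ∈ 𝓑.biUnion id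
        · have hvT : v ∈ S ∪ 𝓑.biUnion id := Finset.mem_union_right _ hvU
          have hKT : K ⊆ (S ∪ 𝓑.biUnion id).erase v := by
            intro w hw
            rw [Finset.mem_erase]
            exact ⟨fun h => hv (hK (h ▸ hw)), Finset.mem_union_left _ (hKS hw)⟩
          rw [extend_induce_of_mem hv hK hvT hKT]
          have hvG : v ∉ (D.induce ((S ∪ 𝓑.biUnion id).erase v)).verts := by
            rw [induce_verts']
            exact fun h => hv (Finset.mem_inter.mp h).1
          have hKG : K ⊆ (D.induce ((S ∪ 𝓑.biUnion id).erase v)).verts := by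
            rw [induce_verts']; exact Finset.subset_inter hK hKT
          refine IsDTree.grow _ ?_ v hvG K hKG hKcard ⟨by rw [completeOn_verts]; exact hKG, ?_⟩ out
          · by_cases hWmem : (D.delete S).verts ∈ 𝓑
            · have hTeq : (S ∪ 𝓑.biUnion id).erase v = D.verts := by
                ext x
                rw [Finset.mem_erase, Finset.mem_union, Finset.mem_biUnion]
                constructor
                · rintro ⟨hxv, hxS | ⟨B, hB, hxB⟩⟩
                  · exact hSV hxS
                  · simp only [id_eq] at hxB
                    rcases hcompcases B hB with rfl | rfl
                    · rw [Finset.mem_singleton] at hxB; exact absurd hxB hxv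
                    · rw [delete_verts, Finset.mem_sdiff] at hxB
                      exact hxB.1
                · intro hx
                  refine ⟨fun h => hv (h ▸ hx), ?_⟩
                  by_cases hxS : x ∈ S
                  · exact Or.inl hxS
                  · refine Or.inr ⟨(D.delete S).verts, hWmem, ?_⟩
                    simp only [id_eq, delete_verts, Finset.mem_sdiff]
                    exact ⟨hx, hxS⟩
              rw [hTeq, induce_of_subset (Finset.Subset.refl _)]
              exact hD
            · have hTeq : (S ∪ 𝓑.biUnion id).erase v = S := by
                ext x
                rw [Finset.mem_erase, Finset.mem_union, Finset.mem_biUnion]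
                constructor
                · rintro ⟨hxv, hxS | ⟨B, hB, hxB⟩⟩
                  · exact hxS
                  · simp only [id_eq] at hxB
                    rcases hcompcases B hB with rfl | rfl
                    · rw [Finset.mem_singleton] at hxB; exact absurd hxB hxv
                    · exact absurd hB hWmem
                · intro hxS
                  exact ⟨fun h => hvS (h ▸ hxS), Or.inl hxS⟩
              rw [hTeq, ← hKSeq, induce_completeOn_sub hK hKcomp]
              exact IsDTree.base K hKcard
          · intro e he
            have h2 := hKcomp.2 he
            rw [mem_completeOn_arcs] at he
            rw [mem_induce_arcs]
            exact ⟨h2, hKT he.1, hKT he.2.1⟩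
        · have hvT : v ∉ S ∪ 𝓑.biUnion id := by
            rw [Finset.mem_union]
            rintro (h | h)
            exacts [hvS h, hvU h]
          rw [extend_induce_of_not_mem hv hK hvT]
          have hsub : D.verts ⊆ S ∪ 𝓑.biUnion id := by
            intro x hx
            rw [Finset.mem_union]
            by_cases hxS : x ∈ S
            · exact Or.inl hxS
            · right
              obtain ⟨B₀, hB₀⟩ := hBne
              rcases hcompcases B₀ hB₀ with rfl | rfl
              · exact absurd (Finset.mem_biUnion.mpr ⟨{v}, hB₀, (by simp : v ∈ id ({v} : Finset ℕ))⟩) hvU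
              · refine Finset.mem_biUnion.mpr ⟨_, hB₀, ?_⟩
                simp only [id_eq, delete_verts, Finset.mem_sdiff]
                exact ⟨hx, hxS⟩
          rw [induce_of_subset hsub]
          exact hD
      -- ===== CASE 2b : D - S is not strongly connected =====
      · have hsepD : D.IsMinSeparator S := by
          refine ⟨⟨hSV, Or.inl hDSC⟩, ?_⟩
          intro T hT
          by_contra hlt
          push_neg at hlt
          have hsc := dtree_delete_sc hD T (by omega)
          rcases hT.2 with h | h
          · exact h hsc
          · have hTsub : T ⊆ D.verts := hT.1
            rw [delete_verts, Finset.card_sdiff_of_subset hTsub] at h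
            have := Finset.card_le_card hTsub
            omega
        by_cases hvU : v ∈ 𝓑.biUnion id
        · obtain ⟨Bv, hBvmem, hvBv⟩ := Finset.mem_biUnion.mp hvU
          simp only [id_eq] at hvBv
          have hBv := hBcomp Bv hBvmem
          have hBvsub : Bv ⊆ ((D.extend v K out).delete S).verts := hBv.1
          have hKBv : ∀ w ∈ K, w ∉ S → w ∈ Bv := by
            intro w hwK hwS
            have hwV : w ∈ D.verts := hK hwK
            have hXsub : ({v, w} : Finset ℕ) ⊆ ((D.extend v K out).delete S).verts := by
              intro x hx
              rw [delete_verts, extend_verts, Finset.mem_sdiff, Finset.mem_insert]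
              rcases Finset.mem_insert.mp hx with rfl | hx
              · exact ⟨Or.inl rfl, hvS⟩
              · rw [Finset.mem_singleton] at hx; subst hx
                exact ⟨Or.inr hwV, hwS⟩
            have hXsc : StronglyConnected (((D.extend v K out).delete S).induce {v, w}) := by
              have harc1 : (((D.extend v K out).delete S).induce {v, w}).Reach v w := by
                refine Relation.ReflTransGen.single ?_
                rw [mem_induce_arcs, mem_delete_arcs]
                exact ⟨⟨(mem_extend_arcs hv hK).mpr (Or.inr (Or.inr (Or.inl ⟨rfl, hwK⟩))),
                  hvS, hwS⟩, Finset.mem_insert_self _ _, by simp⟩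
              have harc2 : (((D.extend v K out).delete S).induce {v, w}).Reach w v := by
                refine Relation.ReflTransGen.single ?_
                rw [mem_induce_arcs, mem_delete_arcs]
                exact ⟨⟨(mem_extend_arcs hv hK).mpr (Or.inr (Or.inl ⟨hwK, rfl⟩)),
                  hwS, hvS⟩, by simp, Finset.mem_insert_self _ _⟩
              intro a ha b hb
              rw [induce_verts', Finset.mem_inter] at ha hb
              have ha' : a = v ∨ a = w := by simpa using ha.2
              have hb' : b = v ∨ b = w := by simpa using hb.2
              rcases ha' with rfl | rfl <;> rcases hb' with rfl | rfl
              · exact Relation.ReflTransGen.refl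
              · exact harc1
              · exact harc2
              · exact Relation.ReflTransGen.refl
            exact subset_component hBv hvBv (Finset.mem_insert_self _ _) hXsub hXsc
              (by simp)
          set 𝓒 := (Bv.erase v).powerset.filter (fun C => (D.delete S).IsStrongComponent C)
            with h𝓒
          set 𝓑' := (𝓑.erase Bv) ∪ 𝓒 with h𝓑'
          have hf1 : ∀ B ∈ 𝓑.erase Bv, v ∉ B := by
            intro B hB hvB
            exact (Finset.mem_erase.mp hB).1
              (component_eq (hBcomp B (Finset.mem_of_mem_erase hB)) hBv hvB hvBv)
          have hf2 : ∀ X ∈ 𝓑', (D.delete S).IsStrongComponent X := by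
            intro X hX
            rcases Finset.mem_union.mp hX with hX | hX
            · exact comp_transfer hv hK (hf1 X hX) (hBcomp X (Finset.mem_of_mem_erase hX))
            · exact (Finset.mem_filter.mp hX).2
          have hf3 : ∀ x ∈ Bv.erase v, ∃ C ∈ 𝓒, x ∈ C := by
            intro x hx
            rw [Finset.mem_erase] at hx
            have hxDS : x ∈ (D.delete S).verts := by
              have hh := hBvsub hx.2
              rw [delete_verts, extend_verts, Finset.mem_sdiff, Finset.mem_insert] at hh
              rw [delete_verts, Finset.mem_sdiff]
              rcases hh.1 with rfl | h
              · exact absurd rfl hx.1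
              · exact ⟨h, hh.2⟩
            obtain ⟨C, hC, hxC⟩ := exists_component hxDS
            have hvC : v ∉ C := by
              intro hvC
              have hh := hC.1 hvC
              rw [delete_verts, Finset.mem_sdiff] at hh
              exact hv hh.1
            have hCsub : C ⊆ Bv := by
              refine subset_component hBv hx.2 hxC ?_ ?_
              · intro y hy
                have hh := hC.1 hy
                rw [delete_verts, Finset.mem_sdiff] at hh
                rw [delete_verts, extend_verts, Finset.mem_sdiff, Finset.mem_insert]
                exact ⟨Or.inr hh.1, hh.2⟩
              · rw [delete_induce_eq hv hK hvC]
                exact hC.2.2.1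
            refine ⟨C, ?_, hxC⟩
            rw [h𝓒, Finset.mem_filter, Finset.mem_powerset]
            refine ⟨?_, hC⟩
            intro y hy
            rw [Finset.mem_erase]
            exact ⟨fun h => hvC (h ▸ hy), hCsub hy⟩
          have hf4 : (S ∪ 𝓑.biUnion id).erase v = S ∪ 𝓑'.biUnion id := by
            ext x
            rw [Finset.mem_erase, Finset.mem_union, Finset.mem_union, Finset.mem_biUnion,
              Finset.mem_biUnion]
            constructor
            · rintro ⟨hxv, hxS | ⟨B, hB, hxB⟩⟩
              · exact Or.inl hxS
              · simp only [id_eq] at hxB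
                by_cases hBBv : B = Bv
                · subst hBBv
                  obtain ⟨C, hC, hxC⟩ := hf3 x (Finset.mem_erase.mpr ⟨hxv, hxB⟩)
                  exact Or.inr ⟨C, Finset.mem_union_right _ hC, by simpa using hxC⟩
                · exact Or.inr ⟨B, Finset.mem_union_left _ (Finset.mem_erase.mpr ⟨hBBv, hB⟩),
                    by simpa using hxB⟩
            · rintro (hxS | ⟨X, hX, hxX⟩)
              · exact ⟨fun h => hvS (h ▸ hxS), Or.inl hxS⟩
              · simp only [id_eq] at hxX
                rcases Finset.mem_union.mp hX with hX | hX
                · exact ⟨fun h => hf1 X hX (h ▸ hxX),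
                    Or.inr ⟨X, Finset.mem_of_mem_erase hX, by simpa using hxX⟩⟩
                · have hXsub := Finset.mem_powerset.mp (Finset.mem_filter.mp hX).1
                  have hh := hXsub hxX
                  rw [Finset.mem_erase] at hh
                  exact ⟨hh.1, Or.inr ⟨Bv, hBvmem, by simpa using hh.2⟩⟩
          have hvT : v ∈ S ∪ 𝓑.biUnion id := Finset.mem_union_right _ hvU
          have hKT : K ⊆ (S ∪ 𝓑.biUnion id).erase v := by
            intro w hw
            rw [Finset.mem_erase]
            refine ⟨fun h => hv (hK (h ▸ hw)), ?_⟩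
            by_cases hwS : w ∈ S
            · exact Finset.mem_union_left _ hwS
            · exact Finset.mem_union_right _
                (Finset.mem_biUnion.mpr ⟨Bv, hBvmem, by simpa using hKBv w hw hwS⟩)
          rw [extend_induce_of_mem hv hK hvT hKT]
          have hvG : v ∉ (D.induce ((S ∪ 𝓑.biUnion id).erase v)).verts := by
            rw [induce_verts']
            exact fun h => hv (Finset.mem_inter.mp h).1
          have hKG : K ⊆ (D.induce ((S ∪ 𝓑.biUnion id).erase v)).verts := by
            rw [induce_verts']; exact Finset.subset_inter hK hKT
          refine IsDTree.grow _ ?_ v hvG K hKG hKcard ⟨by rw [completeOn_verts]; exact hKG, ?_⟩ out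
          · by_cases h𝓑ne : 𝓑'.Nonempty
            · rw [hf4]
              exact ih hbig' S hsepD 𝓑' h𝓑ne hf2
            · rw [Finset.not_nonempty_iff_eq_empty] at h𝓑ne
              have hBve : Bv.erase v = ∅ := by
                by_contra hne
                obtain ⟨x, hx⟩ := Finset.nonempty_iff_ne_empty.mpr hne
                obtain ⟨C, hC, _⟩ := hf3 x hx
                have hh : C ∈ 𝓑' := Finset.mem_union_right _ hC
                rw [h𝓑ne] at hh
                exact absurd hh (Finset.notMem_empty _)
              have hKSsub : K ⊆ S := by
                intro w hw
                by_contra hwS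
                have h1 := hKBv w hw hwS
                have hwv : w ≠ v := fun h => hv (hK (h ▸ hw))
                have hh : w ∈ Bv.erase v := Finset.mem_erase.mpr ⟨hwv, h1⟩
                rw [hBve] at hh
                exact absurd hh (Finset.notMem_empty _)
              have hKSeq : K = S := Finset.eq_of_subset_of_card_le hKSsub (by omega)
              have hTeq : (S ∪ 𝓑.biUnion id).erase v = S := by
                rw [hf4, h𝓑ne]
                simp
              rw [hTeq, ← hKSeq, induce_completeOn_sub hK hKcomp]
              exact IsDTree.base K hKcard
          · intro e he
            have h2 := hKcomp.2 he
            rw [mem_completeOn_arcs] at he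
            rw [mem_induce_arcs]
            exact ⟨h2, hKT he.1, hKT he.2.1⟩
        · have hvT : v ∉ S ∪ 𝓑.biUnion id := by
            rw [Finset.mem_union]
            rintro (h | h)
            exacts [hvS h, hvU h]
          rw [extend_induce_of_not_mem hv hK hvT]
          refine ih hbig' S hsepD 𝓑 hBne ?_
          intro B hB
          refine comp_transfer hv hK ?_ (hBcomp B hB)
          intro hvB
          exact hvU (Finset.mem_biUnion.mpr ⟨B, hB, by simpa using hvB⟩)

end Dgraph

open Dgraph
/-- Let `D` be a directed `(k-1)`-tree on `n ≥ k+1` vertices and `S` a minimum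
separator. For every nonempty collection `𝓑` of strong components of `D - S`,
the subdigraph induced by `S` together with their union is again a directed
`(k-1)`-tree. -/
theorem stmt9 (k n : ℕ) (hk : 2 ≤ k) (hn : k + 1 ≤ n)
    (D : Dgraph) (hD : Dgraph.IsDTree (k - 1) D) (hcard : D.verts.card = n)
    (S : Finset ℕ) (hS : D.IsMinSeparator S) :
    ∀ 𝓑 : Finset (Finset ℕ), 𝓑.Nonempty →
      (∀ B ∈ 𝓑, (D.delete S).IsStrongComponent B) →
      Dgraph.IsDTree (k - 1) (D.induce (S ∪ 𝓑.biUnion id)) := by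
  intro 𝓑 h1 h2
  have hm : (k - 1) + 1 ≤ D.verts.card := by rw [hcard]; omega
  exact Dgraph.dtree_main (k - 1) (by omega) D hD hm S hS 𝓑 h1 h2
end

section
/- Let k ≥ 1 and n ≥ k be integers. The saturation number sat(n, Dₖ), the minimum number of arcs of an n-vertex Dₖ-saturated digraph, equals C(n−k+1, 2) + (k−1)(2n−k). -/
namespace DSat

open Dgraph Finset
open scoped Classical

noncomputable section

/-- The conjectured saturation number. -/
def target (k n : ℕ) : ℕ := (n - k + 1).choose 2 + (k - 1) * (2 * n - k)

/-- Adding arc `(u,v)` to `D` creates a `k`-strong subdigraph. -/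
def Creates (k : ℕ) (D : Dgraph) (u v : ℕ) : Prop :=
  ∃ H : Dgraph, H.IsSubdigraph (D.addArc u v) ∧ H.KStrong k

/-- Missing, non-creating ordered pairs. -/
def badset (k : ℕ) (D : Dgraph) : Finset (ℕ × ℕ) :=
  (D.verts ×ˢ D.verts).filter (fun e => D.MissingArc e.1 e.2 ∧ ¬ Creates k D e.1 e.2)

lemma mem_badset {k : ℕ} {D : Dgraph} {e : ℕ × ℕ} :
    e ∈ badset k D ↔ D.MissingArc e.1 e.2 ∧ ¬ Creates k D e.1 e.2 := by
  rw [badset, Finset.mem_filter, Finset.mem_product]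
  simp only [Dgraph.MissingArc]
  tauto

lemma sub_refl (D : Dgraph) : D.IsSubdigraph D := ⟨subset_rfl, subset_rfl⟩

lemma sub_trans {A B C : Dgraph} (h1 : A.IsSubdigraph B) (h2 : B.IsSubdigraph C) :
    A.IsSubdigraph C := ⟨h1.1.trans h2.1, h1.2.trans h2.2⟩

lemma induce_sub (D : Dgraph) (S : Finset ℕ) : (D.induce S).IsSubdigraph D :=
  ⟨Finset.inter_subset_left, Finset.filter_subset _ _⟩

@[simp] lemma delete_verts (D : Dgraph) (S : Finset ℕ) :
    (D.delete S).verts = D.verts \ S := rfl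

@[simp] lemma mem_delete_arcs {D : Dgraph} {S : Finset ℕ} {e : ℕ × ℕ} :
    e ∈ (D.delete S).arcs ↔ e ∈ D.arcs ∧ e.1 ∉ S ∧ e.2 ∉ S := by
  simp [Dgraph.delete]

@[simp] lemma induce_verts (D : Dgraph) (S : Finset ℕ) :
    (D.induce S).verts = D.verts ∩ S := rfl

@[simp] lemma mem_induce_arcs {D : Dgraph} {S : Finset ℕ} {e : ℕ × ℕ} :
    e ∈ (D.induce S).arcs ↔ e ∈ D.arcs ∧ e.1 ∈ S ∧ e.2 ∈ S := by
  simp [Dgraph.induce]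

@[simp] lemma addArc_verts (D : Dgraph) (u v : ℕ) : (D.addArc u v).verts = D.verts := rfl

lemma addArc_arcs (D : Dgraph) {u v : ℕ} (hu : u ∈ D.verts) (hv : v ∈ D.verts)
    (huv : u ≠ v) : (D.addArc u v).arcs = insert (u, v) D.arcs := by
  simp [Dgraph.addArc, hu, hv, huv]

/-- Removing an extra arc from reachability. -/
lemma reach_addArc_cases {r : ℕ → ℕ → Prop} {x y a b : ℕ}
    (h : Relation.ReflTransGen (fun p q => r p q ∨ (p = x ∧ q = y)) a b) :
    Relation.ReflTransGen r a b ∨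
      (Relation.ReflTransGen r a x ∧ Relation.ReflTransGen r y b) := by
  induction h with
  | refl => exact Or.inl .refl
  | tail hab hstep ih =>
    rcases hstep with hr | ⟨rfl, rfl⟩
    · rcases ih with h1 | ⟨h1, h2⟩
      · exact Or.inl (h1.tail hr)
      · exact Or.inr ⟨h1, h2.tail hr⟩
    · rcases ih with h1 | ⟨h1, h2⟩
      · exact Or.inr ⟨h1, .refl⟩
      · exact Or.inr ⟨h1, .refl⟩

lemma reach_mono {G G' : Dgraph} (h : G.arcs ⊆ G'.arcs) {a b : ℕ} (hr : G.Reach a b) :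
    G'.Reach a b :=
  Relation.ReflTransGen.mono (fun _ _ hx => h hx) _ _ hr

end

end DSat
namespace DSat

open Dgraph Finset
open scoped Classical

noncomputable section

/-- The strong-component (class) of `x` in `D - T`. -/
def cls (D : Dgraph) (T : Finset ℕ) (x : ℕ) : Finset ℕ :=
  (D.verts \ T).filter (fun w => (D.delete T).Reach x w ∧ (D.delete T).Reach w x)

/-- The strong components of `D - T`. -/
def classes (D : Dgraph) (T : Finset ℕ) : Finset (Finset ℕ) :=
  (D.verts \ T).image (cls D T)

/-- The child digraph associated to a component. -/
def child (D : Dgraph) (T B : Finset ℕ) : Dgraph := D.induce (B ∪ T)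

lemma mem_cls {D : Dgraph} {T : Finset ℕ} {x w : ℕ} :
    w ∈ cls D T x ↔ (w ∈ D.verts ∧ w ∉ T) ∧ (D.delete T).Reach x w ∧ (D.delete T).Reach w x := by
  simp [cls, Finset.mem_sdiff]

lemma self_mem_cls {D : Dgraph} {T : Finset ℕ} {x : ℕ} (h1 : x ∈ D.verts) (h2 : x ∉ T) :
    x ∈ cls D T x := mem_cls.mpr ⟨⟨h1, h2⟩, .refl, .refl⟩

lemma cls_eq_of_mem {D : Dgraph} {T : Finset ℕ} {x y : ℕ} (hy : y ∈ cls D T x) :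
    cls D T x = cls D T y := by
  rw [mem_cls] at hy
  ext w
  rw [mem_cls, mem_cls]
  constructor
  · rintro ⟨hw, h1, h2⟩
    exact ⟨hw, hy.2.2.trans h1, h2.trans hy.2.1⟩
  · rintro ⟨hw, h1, h2⟩
    exact ⟨hw, hy.2.1.trans h1, h2.trans hy.2.2⟩

lemma cls_eq_of_mem_classes {D : Dgraph} {T B : Finset ℕ} (hB : B ∈ classes D T) {x : ℕ}
    (hx : x ∈ B) : B = cls D T x := by
  obtain ⟨z, hz, rfl⟩ := Finset.mem_image.mp hB
  exact cls_eq_of_mem hx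

lemma classes_disjoint {D : Dgraph} {T B B' : Finset ℕ} (hB : B ∈ classes D T)
    (hB' : B' ∈ classes D T) {x : ℕ} (hx : x ∈ B) (hx' : x ∈ B') : B = B' := by
  rw [cls_eq_of_mem_classes hB hx, cls_eq_of_mem_classes hB' hx']

lemma classes_subset {D : Dgraph} {T B : Finset ℕ} (hB : B ∈ classes D T) :
    B ⊆ D.verts \ T := by
  obtain ⟨z, hz, rfl⟩ := Finset.mem_image.mp hB
  exact Finset.filter_subset _ _

lemma classes_nonempty {D : Dgraph} {T B : Finset ℕ} (hB : B ∈ classes D T) : B.Nonempty := by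
  obtain ⟨z, hz, rfl⟩ := Finset.mem_image.mp hB
  rw [Finset.mem_sdiff] at hz
  exact ⟨z, self_mem_cls hz.1 hz.2⟩

lemma cls_mem_classes {D : Dgraph} {T : Finset ℕ} {x : ℕ} (h1 : x ∈ D.verts) (h2 : x ∉ T) :
    cls D T x ∈ classes D T :=
  Finset.mem_image_of_mem _ (Finset.mem_sdiff.mpr ⟨h1, h2⟩)

lemma mutual_reach_of_same_cls {D : Dgraph} {T : Finset ℕ} {x y : ℕ}
    (h1 : x ∈ D.verts) (h2 : x ∉ T) (h : y ∈ cls D T x) :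
    (D.delete T).Reach x y ∧ (D.delete T).Reach y x := (mem_cls.mp h).2

lemma child_sub (D : Dgraph) (T B : Finset ℕ) : (child D T B).IsSubdigraph D :=
  induce_sub D _

lemma child_verts {D : Dgraph} {T B : Finset ℕ} (hT : T ⊆ D.verts)
    (hB : B ∈ classes D T) : (child D T B).verts = B ∪ T := by
  have : B ∪ T ⊆ D.verts := Finset.union_subset
    ((classes_subset hB).trans (Finset.sdiff_subset)) hT
  simpa [child, Finset.inter_eq_right] using this

lemma child_verts_card {D : Dgraph} {T B : Finset ℕ} (hT : T ⊆ D.verts)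
    (hB : B ∈ classes D T) : (child D T B).verts.card = B.card + T.card := by
  rw [child_verts hT hB]
  rw [Finset.card_union_of_disjoint]
  exact Finset.disjoint_left.mpr (fun a ha hat => (Finset.mem_sdiff.mp (classes_subset hB ha)).2 hat)

end

end DSat
namespace DSat

open Dgraph Finset
open scoped Classical

noncomputable section

lemma creates_arc_mem {k : ℕ} {D H : Dgraph} {x y : ℕ}
    (hmiss : D.MissingArc x y)
    (hno : ∀ H : Dgraph, H.IsSubdigraph D → ¬ H.KStrong k)
    (hsub : H.IsSubdigraph (D.addArc x y)) (hk : H.KStrong k) :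
    (x, y) ∈ H.arcs := by
  by_contra hnotin
  refine hno H ⟨?_, ?_⟩ hk
  · have := hsub.1; rwa [addArc_verts] at this
  · intro e he
    have h2 := hsub.2 he
    rw [addArc_arcs D hmiss.1 hmiss.2.1 hmiss.2.2.1, Finset.mem_insert] at h2
    rcases h2 with rfl | h2
    · exact absurd he hnotin
    · exact h2

/-- Transfer of reachability in `H - T` to `(D - T) (+ e)`. -/
lemma reach_transfer {D H : Dgraph} {T : Finset ℕ} {x y a b : ℕ}
    (hsub : H.IsSubdigraph (D.addArc x y))
    (hxv : x ∈ D.verts) (hyv : y ∈ D.verts) (hxy : x ≠ y)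
    (h : (H.delete T).Reach a b) :
    Relation.ReflTransGen
      (fun p q => (p, q) ∈ (D.delete T).arcs ∨ (p = x ∧ q = y)) a b := by
  refine Relation.ReflTransGen.mono ?_ _ _ h
  intro p q hpq
  rw [mem_delete_arcs] at hpq
  have h2 := hsub.2 hpq.1
  rw [addArc_arcs D hxv hyv hxy, Finset.mem_insert] at h2
  rcases h2 with h2 | h2
  · right; exact ⟨congrArg Prod.fst h2, congrArg Prod.snd h2⟩
  · left; exact mem_delete_arcs.mpr ⟨h2, hpq.2⟩

lemma hverts_sub {D H : Dgraph} {x y : ℕ} (hsub : H.IsSubdigraph (D.addArc x y)) :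
    H.verts ⊆ D.verts := by
  have := hsub.1; rwa [addArc_verts] at this

lemma HminusT_card {k : ℕ} {H : Dgraph} {T : Finset ℕ} (hk : H.KStrong k)
    (hTcard : T.card + 1 ≤ k) : 2 ≤ (H.verts \ T).card := by
  have h1 := hk.1
  have h2 : H.verts.card ≤ (H.verts \ T).card + T.card := Finset.card_le_card_sdiff_add_card
  omega

/-- Main localization lemma: a created `k`-strong subdigraph localizes into a
single child, provided the endpoints are compatible with a single class. -/
lemma loc_main {k : ℕ} {D : Dgraph} {T : Finset ℕ} {x y : ℕ}
    (hT : T ⊆ D.verts) (hTcard : T.card + 1 ≤ k)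
    (hmiss : D.MissingArc x y) (hcr : Creates k D x y)
    (hno : ∀ H : Dgraph, H.IsSubdigraph D → ¬ H.KStrong k)
    (hcase : x ∈ T ∨ y ∈ T ∨ (x ∉ T ∧ y ∉ T ∧ cls D T x = cls D T y)) :
    ∃ B ∈ classes D T, Creates k (child D T B) x y ∧
      (x ∉ T → x ∈ B) ∧ (y ∉ T → y ∈ B) := by
  obtain ⟨H, hsub, hHk⟩ := hcr
  have harc : (x, y) ∈ H.arcs := creates_arc_mem hmiss hno hsub hHk
  have hxH : x ∈ H.verts := (H.arcs_mem _ harc).1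
  have hyH : y ∈ H.verts := (H.arcs_mem _ harc).2
  have hHD : H.verts ⊆ D.verts := hverts_sub hsub
  have hSC : StronglyConnected (H.delete T) := hHk.2 T (by omega)
  have hreach : ∀ a ∈ H.verts \ T, ∀ b ∈ H.verts \ T, (H.delete T).Reach a b := by
    intro a ha b hb
    exact hSC a (by simpa [Dgraph.delete] using ha) b (by simpa [Dgraph.delete] using hb)
  -- find the class B together with H.verts \ T ⊆ B
  have hcard2 := HminusT_card hHk hTcard
  obtain ⟨w0, hw0⟩ : (H.verts \ T).Nonempty := Finset.card_pos.mp (by omega)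
  -- choose base point z
  have main : ∃ B ∈ classes D T, (H.verts \ T ⊆ B) ∧ (x ∉ T → x ∈ B) ∧ (y ∉ T → y ∈ B) := by
    rcases hcase with hxT | hyT | ⟨hxT, hyT, hclseq⟩
    · -- x ∈ T : the extra arc does not survive in H - T
      have harcs : ∀ a b, (a, b) ∈ (H.delete T).arcs → (a, b) ∈ (D.delete T).arcs := by
        intro a b hab
        rw [mem_delete_arcs] at hab ⊢
        have h2 := hsub.2 hab.1
        rw [addArc_arcs D hmiss.1 hmiss.2.1 hmiss.2.2.1, Finset.mem_insert] at h2
        rcases h2 with h2 | h2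
        · exact absurd (by rw [show a = x from congrArg Prod.fst h2] at hab; exact hab.2.1)
            (not_not.mpr hxT)
        · exact ⟨h2, hab.2⟩
      -- every vertex of H \ T is in cls w0
      have hsubB : H.verts \ T ⊆ cls D T w0 := by
        intro w hw
        have h1 : (D.delete T).Reach w0 w :=
          Relation.ReflTransGen.mono (fun p q h => harcs p q h) _ _ (hreach _ hw0 _ hw)
        have h2 : (D.delete T).Reach w w0 :=
          Relation.ReflTransGen.mono (fun p q h => harcs p q h) _ _ (hreach _ hw _ hw0)
        have hwD : w ∈ D.verts := hHD (Finset.mem_sdiff.mp hw).1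
        exact mem_cls.mpr ⟨⟨hwD, (Finset.mem_sdiff.mp hw).2⟩, h1, h2⟩
      have hw0D : w0 ∈ D.verts := hHD (Finset.mem_sdiff.mp hw0).1
      refine ⟨cls D T w0, cls_mem_classes hw0D (Finset.mem_sdiff.mp hw0).2, hsubB, ?_, ?_⟩
      · intro hxT'; exact hsubB (Finset.mem_sdiff.mpr ⟨hxH, hxT'⟩)
      · intro hyT'; exact hsubB (Finset.mem_sdiff.mpr ⟨hyH, hyT'⟩)
    · -- y ∈ T : symmetric, extra arc killed as well
      have harcs : ∀ a b, (a, b) ∈ (H.delete T).arcs → (a, b) ∈ (D.delete T).arcs := by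
        intro a b hab
        rw [mem_delete_arcs] at hab ⊢
        have h2 := hsub.2 hab.1
        rw [addArc_arcs D hmiss.1 hmiss.2.1 hmiss.2.2.1, Finset.mem_insert] at h2
        rcases h2 with h2 | h2
        · exact absurd (by rw [show b = y from congrArg Prod.snd h2] at hab; exact hab.2.2)
            (not_not.mpr hyT)
        · exact ⟨h2, hab.2⟩
      have hsubB : H.verts \ T ⊆ cls D T w0 := by
        intro w hw
        have h1 : (D.delete T).Reach w0 w :=
          Relation.ReflTransGen.mono (fun p q h => harcs p q h) _ _ (hreach _ hw0 _ hw)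
        have h2 : (D.delete T).Reach w w0 :=
          Relation.ReflTransGen.mono (fun p q h => harcs p q h) _ _ (hreach _ hw _ hw0)
        have hwD : w ∈ D.verts := hHD (Finset.mem_sdiff.mp hw).1
        exact mem_cls.mpr ⟨⟨hwD, (Finset.mem_sdiff.mp hw).2⟩, h1, h2⟩
      have hw0D : w0 ∈ D.verts := hHD (Finset.mem_sdiff.mp hw0).1
      refine ⟨cls D T w0, cls_mem_classes hw0D (Finset.mem_sdiff.mp hw0).2, hsubB, ?_, ?_⟩
      · intro hxT'; exact hsubB (Finset.mem_sdiff.mpr ⟨hxH, hxT'⟩)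
      · intro hyT'; exact hsubB (Finset.mem_sdiff.mpr ⟨hyH, hyT'⟩)
    · -- x, y ∉ T and same class
      have hxv := hmiss.1
      have hyv := hmiss.2.1
      have hRxy : (D.delete T).Reach x y := by
        have : y ∈ cls D T x := by
          rw [hclseq]; exact self_mem_cls hyv hyT
        exact (mem_cls.mp this).2.1
      have hsubB : H.verts \ T ⊆ cls D T x := by
        intro w hw
        have hwH := (Finset.mem_sdiff.mp hw).1
        have hwT := (Finset.mem_sdiff.mp hw).2
        have h1 : (D.delete T).Reach y w := by
          have := reach_transfer hsub hxv hyv hmiss.2.2.1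
            (hreach _ (Finset.mem_sdiff.mpr ⟨hyH, hyT⟩) _ hw)
          rcases reach_addArc_cases this with h | ⟨_, h⟩ <;> exact h
        have h2 : (D.delete T).Reach w x := by
          have := reach_transfer hsub hxv hyv hmiss.2.2.1
            (hreach _ hw _ (Finset.mem_sdiff.mpr ⟨hxH, hxT⟩))
          rcases reach_addArc_cases this with h | ⟨h, _⟩ <;> exact h
        exact mem_cls.mpr ⟨⟨hHD hwH, hwT⟩, hRxy.trans h1, h2⟩
      refine ⟨cls D T x, cls_mem_classes hxv hxT, hsubB, fun _ => self_mem_cls hxv hxT,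
        fun _ => ?_⟩
      rw [hclseq]; exact self_mem_cls hyv hyT
  -- now build the Creates witness for the child
  obtain ⟨B, hBmem, hHsubB, hxB, hyB⟩ := main
  refine ⟨B, hBmem, ⟨H, ⟨?_, ?_⟩, hHk⟩, hxB, hyB⟩
  · -- verts
    rw [addArc_verts]
    intro z hz
    rw [child, induce_verts, Finset.mem_inter]
    refine ⟨hHD hz, ?_⟩
    by_cases hzT : z ∈ T
    · exact Finset.mem_union_right _ hzT
    · exact Finset.mem_union_left _ (hHsubB (Finset.mem_sdiff.mpr ⟨hz, hzT⟩))
  · -- arcs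
    have hxC : x ∈ (child D T B).verts := by
      rw [child, induce_verts, Finset.mem_inter]
      refine ⟨hmiss.1, ?_⟩
      by_cases hxT : x ∈ T
      · exact Finset.mem_union_right _ hxT
      · exact Finset.mem_union_left _ (hxB hxT)
    have hyC : y ∈ (child D T B).verts := by
      rw [child, induce_verts, Finset.mem_inter]
      refine ⟨hmiss.2.1, ?_⟩
      by_cases hyT : y ∈ T
      · exact Finset.mem_union_right _ hyT
      · exact Finset.mem_union_left _ (hyB hyT)
    intro e he
    have h2 := hsub.2 he
    rw [addArc_arcs D hmiss.1 hmiss.2.1 hmiss.2.2.1, Finset.mem_insert] at h2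
    rw [addArc_arcs (child D T B) hxC hyC hmiss.2.2.1, Finset.mem_insert]
    rcases h2 with rfl | h2
    · exact Or.inl rfl
    · right
      rw [child, mem_induce_arcs]
      have hmem := H.arcs_mem e he
      have hin : ∀ z ∈ H.verts, z ∈ B ∪ T := by
        intro z hz
        by_cases hzT : z ∈ T
        · exact Finset.mem_union_right _ hzT
        · exact Finset.mem_union_left _ (hHsubB (Finset.mem_sdiff.mpr ⟨hz, hzT⟩))
      exact ⟨h2, hin _ hmem.1, hin _ hmem.2⟩

/-- Cross localization: a creating pair outside `T` yields backwards reachability. -/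
lemma loc_reach {k : ℕ} {D : Dgraph} {T : Finset ℕ} {x y : ℕ}
    (hTcard : T.card + 1 ≤ k)
    (hmiss : D.MissingArc x y) (hcr : Creates k D x y)
    (hno : ∀ H : Dgraph, H.IsSubdigraph D → ¬ H.KStrong k)
    (hxT : x ∉ T) (hyT : y ∉ T) :
    (D.delete T).Reach y x := by
  obtain ⟨H, hsub, hHk⟩ := hcr
  have harc : (x, y) ∈ H.arcs := creates_arc_mem hmiss hno hsub hHk
  have hxH : x ∈ H.verts := (H.arcs_mem _ harc).1
  have hyH : y ∈ H.verts := (H.arcs_mem _ harc).2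
  have hSC : StronglyConnected (H.delete T) := hHk.2 T (by omega)
  have hr : (H.delete T).Reach y x := by
    refine hSC y ?_ x ?_ <;> simp [Dgraph.delete, Finset.mem_sdiff]
    · exact ⟨hyH, hyT⟩
    · exact ⟨hxH, hxT⟩
  have := reach_transfer hsub hmiss.1 hmiss.2.1 hmiss.2.2.1 hr
  rcases reach_addArc_cases this with h | ⟨h, _⟩ <;> exact h

end

end DSat
namespace DSat

open Dgraph Finset
open scoped Classical

noncomputable section

lemma two_mul_choose_two (b : ℕ) : 2 * b.choose 2 = b * (b - 1) := by
  induction b with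
  | zero => rfl
  | succ c ih =>
    rw [show c + 1 - 1 = c from rfl]
    rw [Nat.choose_succ_succ, Nat.mul_add, ih, Nat.choose_one_right]
    cases c with
    | zero => rfl
    | succ d =>
      rw [show d + 1 - 1 = d from rfl]
      ring

lemma sum_card_filter_swap {α β : Type*} (s : Finset α) (t : Finset β) (P : α → β → Prop)
    [∀ a, DecidablePred (P a)] [∀ b, DecidablePred (fun a => P a b)] :
    ∑ a ∈ s, (t.filter (fun b => P a b)).card = ∑ b ∈ t, (s.filter (fun a => P a b)).card := by
  simp only [Finset.card_filter]
  exact Finset.sum_comm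

/-- Extraction of a `(k-1)`-separator. -/
lemma exists_T {k : ℕ} (hk : 1 ≤ k) {D : Dgraph}
    (hno : ∀ H : Dgraph, H.IsSubdigraph D → ¬ H.KStrong k)
    (hn : k + 1 ≤ D.verts.card) :
    ∃ T : Finset ℕ, ∃ u v : ℕ, T ⊆ D.verts ∧ T.card + 1 = k ∧
      u ∈ D.verts ∧ v ∈ D.verts ∧ u ∉ T ∧ v ∉ T ∧ u ≠ v ∧
      ¬ (D.delete T).Reach u v := by
  have hnk := hno D (sub_refl D)
  rw [Dgraph.KStrong] at hnk
  push_neg at hnk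
  obtain ⟨S, hScard, hSnc⟩ := hnk hn
  rw [Dgraph.StronglyConnected] at hSnc
  push_neg at hSnc
  obtain ⟨u, hu, v, hv, huv⟩ := hSnc
  rw [delete_verts, Finset.mem_sdiff] at hu hv
  have hune : u ≠ v := by rintro rfl; exact huv .refl
  set S' := S ∩ D.verts with hS'
  have hS'card : S'.card ≤ k - 1 := by
    have h1 : S'.card ≤ S.card := Finset.card_le_card Finset.inter_subset_left
    omega
  have hS'sub : S' ⊆ D.verts := Finset.inter_subset_right
  have huS' : u ∉ S' := fun h => hu.2 (Finset.mem_inter.mp h).1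
  have hvS' : v ∉ S' := fun h => hv.2 (Finset.mem_inter.mp h).1
  have havcard : k - 1 - S'.card ≤ ((D.verts \ S') \ {u, v}).card := by
    have h1 : (D.verts \ S').card = D.verts.card - S'.card := Finset.card_sdiff_of_subset hS'sub
    have h2 := Finset.card_le_card_sdiff_add_card (s := D.verts \ S') (t := ({u, v} : Finset ℕ))
    have hc2 : ({u, v} : Finset ℕ).card ≤ 2 := Finset.card_insert_le _ _ |>.trans (by simp)
    omega
  obtain ⟨Q, hQsub, hQcard⟩ := Finset.exists_subset_card_eq havcard
  refine ⟨S' ∪ Q, u, v, ?_, ?_, hu.1, hv.1, ?_, ?_, hune, ?_⟩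
  · exact Finset.union_subset hS'sub (hQsub.trans ((Finset.sdiff_subset).trans Finset.sdiff_subset))
  · have hdisj : Disjoint S' Q := by
      refine Finset.disjoint_left.mpr (fun a ha haQ => ?_)
      have := hQsub haQ
      rw [Finset.mem_sdiff, Finset.mem_sdiff] at this
      exact this.1.2 ha
    rw [Finset.card_union_of_disjoint hdisj, hQcard]
    omega
  · rw [Finset.mem_union]
    rintro (h | h)
    · exact huS' h
    · have := hQsub h
      rw [Finset.mem_sdiff] at this
      exact this.2 (by simp)
  · rw [Finset.mem_union]
    rintro (h | h)
    · exact hvS' h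
    · have := hQsub h
      rw [Finset.mem_sdiff] at this
      exact this.2 (by simp)
  · intro hr
    refine huv (reach_mono ?_ hr)
    intro e he
    rw [mem_delete_arcs] at he
    rw [Dgraph.delete, Finset.mem_filter]
    have hmem := D.arcs_mem e he.1
    refine ⟨he.1, fun h1 => ?_, fun h2 => ?_⟩
    · exact he.2.1 (Finset.mem_union_left _ (Finset.mem_inter.mpr ⟨h1, hmem.1⟩))
    · exact he.2.2 (Finset.mem_union_left _ (Finset.mem_inter.mpr ⟨h2, hmem.2⟩))

/-- Base case: graphs on `k` vertices. -/
lemma base_case {k : ℕ} (hk : 1 ≤ k) {D : Dgraph} (hcard : D.verts.card = k) :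
    target k k ≤ D.arcs.card + (badset k D).card := by
  have hsub1 : D.arcs ⊆ D.verts.offDiag := by
    intro e he
    rw [Finset.mem_offDiag]
    exact ⟨(D.arcs_mem e he).1, (D.arcs_mem e he).2, D.no_loops e he⟩
  have hsub2 : badset k D ⊆ D.verts.offDiag := by
    intro e he
    rw [mem_badset] at he
    rw [Finset.mem_offDiag]
    exact ⟨he.1.1, he.1.2.1, he.1.2.2.1⟩
  have hcover : D.verts.offDiag ⊆ D.arcs ∪ badset k D := by
    intro e he
    rw [Finset.mem_offDiag] at he
    rw [Finset.mem_union]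
    by_cases hin : e ∈ D.arcs
    · exact Or.inl hin
    · refine Or.inr (mem_badset.mpr ⟨⟨he.1, he.2.1, he.2.2, hin⟩, ?_⟩)
      rintro ⟨H, hHsub, hHk⟩
      have h1 : H.verts.card ≤ k := by
        have := Finset.card_le_card (hverts_sub hHsub)
        omega
      have := hHk.1
      omega
  have hdisj : Disjoint D.arcs (badset k D) := by
    refine Finset.disjoint_left.mpr (fun e he hb => ?_)
    exact (mem_badset.mp hb).1.2.2.2 he
  have hcard2 : D.verts.offDiag.card ≤ D.arcs.card + (badset k D).card := by
    calc D.verts.offDiag.card ≤ (D.arcs ∪ badset k D).card := Finset.card_le_card hcover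
    _ ≤ D.arcs.card + (badset k D).card := Finset.card_union_le _ _
  have hoff : D.verts.offDiag.card = k * k - k := by
    rw [Finset.offDiag_card, hcard]
  have htarget : target k k = k * k - k := by
    rw [target]
    have h1 : k - k + 1 = 1 := by omega
    rw [h1]
    have h2 : (1 : ℕ).choose 2 = 0 := rfl
    rw [h2]
    have h3 : 2 * k - k = k := by omega
    rw [h3]
    cases k with
    | zero => omega
    | succ c => simp [Nat.succ_sub_one]; ring_nf; omega
  omega

end

end DSat
namespace DSat
noncomputable section
lemma target_child (k b : ℕ) (hk : 1 ≤ k) (hb : 1 ≤ b) :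
    target k (b + (k - 1)) = b.choose 2 + (2 * (k - 1) * b + (k - 1) * (k - 2)) := by
  rw [target]
  have h1 : b + (k - 1) - k + 1 = b := by omega
  rw [h1]
  rcases Nat.exists_eq_add_of_le hk with ⟨c, hc⟩
  subst hc
  cases c with
  | zero => simp
  | succ d =>
    have h3 : 1 + (d + 1) - 1 = d + 1 := by omega
    have h4 : 1 + (d + 1) - 2 = d := by omega
    rw [h3, h4]
    have h2 : 2 * (b + (d + 1)) - (1 + (d + 1)) = 2 * b + d := by omega
    rw [h2]
    ring
end
end DSat
namespace DSat

open Dgraph Finset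
open scoped Classical

noncomputable section

lemma choose_sq (b : ℕ) : 2 * b.choose 2 + b = b * b := by
  rw [two_mul_choose_two]
  cases b with
  | zero => rfl
  | succ c => rw [show c + 1 - 1 = c from rfl]; ring

lemma badchild_missing {k : ℕ} {D : Dgraph} {T B : Finset ℕ}
    (hT : T ⊆ D.verts) (hB : B ∈ classes D T) {e : ℕ × ℕ}
    (he : e ∈ badset k (child D T B)) :
    D.MissingArc e.1 e.2 ∧ e.1 ∈ B ∪ T ∧ e.2 ∈ B ∪ T := by
  have hm := (mem_badset.mp he).1
  have hv := child_verts hT hB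
  have h1 : e.1 ∈ B ∪ T := by rw [← hv]; exact hm.1
  have h2 : e.2 ∈ B ∪ T := by rw [← hv]; exact hm.2.1
  have hBv : B ∪ T ⊆ D.verts := by rw [← hv, child, induce_verts]; exact Finset.inter_subset_left
  have hnD : (e.1, e.2) ∉ D.arcs := by
    intro hin
    exact hm.2.2.2 (by rw [child]; exact mem_induce_arcs.mpr ⟨hin, h1, h2⟩)
  exact ⟨⟨hBv h1, hBv h2, hm.2.2.1, hnD⟩, h1, h2⟩

lemma badchild_noT_mem_badset {k : ℕ} {D : Dgraph} {T B : Finset ℕ}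
    (hT : T ⊆ D.verts) (hTcard : T.card + 1 = k) (hB : B ∈ classes D T)
    (hno : ∀ H : Dgraph, H.IsSubdigraph D → ¬ H.KStrong k) {e : ℕ × ℕ}
    (he : e ∈ badset k (child D T B)) (hnT : ¬(e.1 ∈ T ∧ e.2 ∈ T)) :
    e ∈ badset k D := by
  obtain ⟨hmiss, h1, h2⟩ := badchild_missing hT hB he
  refine mem_badset.mpr ⟨hmiss, ?_⟩
  intro hcr
  have hcase : e.1 ∈ T ∨ e.2 ∈ T ∨
      (e.1 ∉ T ∧ e.2 ∉ T ∧ cls D T e.1 = cls D T e.2) := by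
    by_cases hx : e.1 ∈ T
    · exact Or.inl hx
    by_cases hy : e.2 ∈ T
    · exact Or.inr (Or.inl hy)
    refine Or.inr (Or.inr ⟨hx, hy, ?_⟩)
    have hxB : e.1 ∈ B := (Finset.mem_union.mp h1).resolve_right hx
    have hyB : e.2 ∈ B := (Finset.mem_union.mp h2).resolve_right hy
    rw [← cls_eq_of_mem_classes hB hxB, ← cls_eq_of_mem_classes hB hyB]
  obtain ⟨B₀, hB₀, hcr₀, hx₀, hy₀⟩ := loc_main hT (by omega) hmiss hcr hno hcase
  have hBB : B₀ = B := by
    rcases not_and_or.mp hnT with hx | hy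
    · exact classes_disjoint hB₀ hB (hx₀ hx) ((Finset.mem_union.mp h1).resolve_right hx)
    · exact classes_disjoint hB₀ hB (hy₀ hy) ((Finset.mem_union.mp h2).resolve_right hy)
  rw [hBB] at hcr₀
  exact (mem_badset.mp he).2 hcr₀

theorem lower (k : ℕ) (hk : 1 ≤ k) :
    ∀ (n : ℕ) (D : Dgraph), D.verts.card = n → k ≤ n →
      (∀ H : Dgraph, H.IsSubdigraph D → ¬ H.KStrong k) →
      target k n ≤ D.arcs.card + (badset k D).card := by
  intro n
  induction n using Nat.strong_induction_on with
  | _ n IH =>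
  intro D hDn hkn hno
  rcases eq_or_lt_of_le hkn with heq | hlt
  · subst hDn
    rw [← heq]
    exact base_case hk heq.symm
  · -- step case : k + 1 ≤ n
    subst hDn
    obtain ⟨T, u, v, hT, hTcard, huv1, hvv1, huT, hvT, hune, hnr⟩ :=
      exists_T hk hno hlt
    -- notation
    set W : Finset ℕ := D.verts \ T with hW
    set P : Finset (Finset ℕ) := classes D T with hP
    set m : ℕ := W.card with hm
    have hmn : m + T.card = D.verts.card := by
      rw [hm, hW]
      exact Finset.card_sdiff_add_card_eq_card hT
    have huW : u ∈ W := Finset.mem_sdiff.mpr ⟨huv1, huT⟩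
    have hvW : v ∈ W := Finset.mem_sdiff.mpr ⟨hvv1, hvT⟩
    -- at least two classes
    have hclsne : cls D T u ≠ cls D T v := by
      intro hcc
      have : v ∈ cls D T u := by rw [hcc]; exact self_mem_cls hvv1 hvT
      exact hnr (mem_cls.mp this).2.1
    have hp2 : 2 ≤ P.card := by
      rw [hP]
      exact Finset.one_lt_card.mpr ⟨cls D T u, cls_mem_classes huv1 huT,
        cls D T v, cls_mem_classes hvv1 hvT, hclsne⟩
    -- basic class facts
    have hBW : ∀ B ∈ P, B ⊆ W := fun B hB => classes_subset hB
    have hBpos : ∀ B ∈ P, 1 ≤ B.card := fun B hB =>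
      Finset.card_pos.mpr (classes_nonempty hB)
    have hdisjP : ∀ B ∈ P, ∀ B' ∈ P, B ≠ B' → Disjoint B B' := by
      intro B hB B' hB' hne
      rw [Finset.disjoint_left]
      intro a ha ha'
      exact hne (classes_disjoint hB hB' ha ha')
    have hWbiUnion : W = P.biUnion (fun x => x) := by
      ext x
      constructor
      · intro hx
        rw [Finset.mem_biUnion]
        have hx' := Finset.mem_sdiff.mp hx
        exact ⟨cls D T x, cls_mem_classes hx'.1 hx'.2, self_mem_cls hx'.1 hx'.2⟩
      · intro hx
        rw [Finset.mem_biUnion] at hx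
        obtain ⟨B, hB, hxB⟩ := hx
        exact hBW B hB hxB
    have hS1 : ∑ B ∈ P, B.card = m := by
      rw [hm, hWbiUnion, Finset.card_biUnion hdisjP]
    -- children are strictly smaller
    have hblt : ∀ B ∈ P, B.card < m := by
      intro B hB
      obtain ⟨B', hB', hne⟩ := Finset.exists_mem_ne hp2 B
      have hdis := hdisjP B' hB' B hB hne
      have hsub : B' ∪ B ⊆ W := Finset.union_subset (hBW B' hB') (hBW B hB)
      have h1 := Finset.card_le_card hsub
      rw [Finset.card_union_of_disjoint hdis] at h1
      have := hBpos B' hB'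
      omega
    -- IH applied to each child
    have hIH : ∀ B ∈ P, target k (B.card + T.card) ≤
        (child D T B).arcs.card + (badset k (child D T B)).card := by
      intro B hB
      have hcv := child_verts_card hT hB
      refine IH (B.card + T.card) (by have := hblt B hB; omega) _ hcv ?_ ?_
      · have := hBpos B hB; omega
      · intro H hH
        exact hno H (sub_trans hH (child_sub D T B))
    -- counting sets
    have hτμ : (D.arcs.filter (fun e => e.1 ∈ T ∧ e.2 ∈ T)).card
        + (T.offDiag.filter (fun e => e ∉ D.arcs)).card = (k - 1) * (k - 2) := by
      have h1 : D.arcs.filter (fun e => e.1 ∈ T ∧ e.2 ∈ T)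
          = T.offDiag.filter (fun e => e ∈ D.arcs) := by
        ext e
        simp only [Finset.mem_filter, Finset.mem_offDiag]
        constructor
        · rintro ⟨ha, h1, h2⟩
          exact ⟨⟨h1, h2, D.no_loops e ha⟩, ha⟩
        · rintro ⟨⟨h1, h2, _⟩, ha⟩
          exact ⟨ha, h1, h2⟩
      rw [h1, Finset.card_filter_add_card_filter_not, Finset.offDiag_card]
      rcases Nat.exists_eq_add_of_le hk with ⟨c, hc⟩
      subst hc
      cases c with
      | zero =>
        have hT0 : T.card = 0 := by omega
        simp [hT0]
      | succ d =>
        have hTd : T.card = d + 1 := by omega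
        have h2 : 1 + (d + 1) - 1 = d + 1 := by omega
        have h3 : 1 + (d + 1) - 2 = d := by omega
        rw [hTd, h2, h3]
        have h4 : (d + 1) * (d + 1) = (d + 1) * d + (d + 1) := by ring
        omega
    -- identity (2): children arcs vs arcs
    have hchildarcs : ∀ B : Finset ℕ, (child D T B).arcs
        = D.arcs.filter (fun e => e.1 ∈ B ∪ T ∧ e.2 ∈ B ∪ T) := by
      intro B
      rfl
    have hid2 : (∑ B ∈ P, (child D T B).arcs.card)
          + (D.arcs.filter
            (fun e => e.1 ∉ T ∧ e.2 ∉ T ∧ cls D T e.1 ≠ cls D T e.2)).card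
        = D.arcs.card + (P.card - 1) * (D.arcs.filter (fun e => e.1 ∈ T ∧ e.2 ∈ T)).card := by
      have hswap : ∑ B ∈ P, (child D T B).arcs.card
          = ∑ e ∈ D.arcs, (P.filter (fun B => e.1 ∈ B ∪ T ∧ e.2 ∈ B ∪ T)).card := by
        calc ∑ B ∈ P, (child D T B).arcs.card
            = ∑ B ∈ P, (D.arcs.filter (fun e => e.1 ∈ B ∪ T ∧ e.2 ∈ B ∪ T)).card :=
              Finset.sum_congr rfl (fun B _ => by rw [hchildarcs])
          _ = _ := sum_card_filter_swap P D.arcs _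
      have hpt : ∀ e ∈ D.arcs,
          (P.filter (fun B => e.1 ∈ B ∪ T ∧ e.2 ∈ B ∪ T)).card
            + (if e.1 ∉ T ∧ e.2 ∉ T ∧ cls D T e.1 ≠ cls D T e.2 then 1 else 0)
          = 1 + (P.card - 1) * (if e.1 ∈ T ∧ e.2 ∈ T then 1 else 0) := by
        intro e he
        have hev := D.arcs_mem e he
        have hite : ∀ (c : Prop) [Decidable c], c → (if c then 1 else 0) = 1 :=
          fun c _ hc => if_pos hc
        have hite' : ∀ (c : Prop) [Decidable c], ¬c → (if c then 1 else 0) = 0 :=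
          fun c _ hc => if_neg hc
        by_cases h1 : e.1 ∈ T
        · rw [hite' (e.1 ∉ T ∧ e.2 ∉ T ∧ cls D T e.1 ≠ cls D T e.2) (by tauto)]
          by_cases h2 : e.2 ∈ T
          · rw [hite (e.1 ∈ T ∧ e.2 ∈ T) ⟨h1, h2⟩]
            have hfull : P.filter (fun B => e.1 ∈ B ∪ T ∧ e.2 ∈ B ∪ T) = P :=
              Finset.filter_true_of_mem (fun B _ =>
                ⟨Finset.mem_union_right _ h1, Finset.mem_union_right _ h2⟩)
            rw [hfull]
            omega
          · rw [hite' (e.1 ∈ T ∧ e.2 ∈ T) (fun hc => h2 hc.2)]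
            have hsing : P.filter (fun B => e.1 ∈ B ∪ T ∧ e.2 ∈ B ∪ T)
                = {cls D T e.2} := by
              ext B
              simp only [Finset.mem_filter, Finset.mem_singleton]
              constructor
              · rintro ⟨hBP, _, hB2⟩
                exact cls_eq_of_mem_classes hBP ((Finset.mem_union.mp hB2).resolve_right h2)
              · rintro rfl
                exact ⟨cls_mem_classes hev.2 h2, Finset.mem_union_right _ h1,
                  Finset.mem_union_left _ (self_mem_cls hev.2 h2)⟩
            rw [hsing]
            simp
        · rw [hite' (e.1 ∈ T ∧ e.2 ∈ T) (fun hc => h1 hc.1)]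
          by_cases h2 : e.2 ∈ T
          · rw [hite' (e.1 ∉ T ∧ e.2 ∉ T ∧ cls D T e.1 ≠ cls D T e.2) (by tauto)]
            have hsing : P.filter (fun B => e.1 ∈ B ∪ T ∧ e.2 ∈ B ∪ T)
                = {cls D T e.1} := by
              ext B
              simp only [Finset.mem_filter, Finset.mem_singleton]
              constructor
              · rintro ⟨hBP, hB1, _⟩
                exact cls_eq_of_mem_classes hBP ((Finset.mem_union.mp hB1).resolve_right h1)
              · rintro rfl
                exact ⟨cls_mem_classes hev.1 h1,
                  Finset.mem_union_left _ (self_mem_cls hev.1 h1),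
                  Finset.mem_union_right _ h2⟩
            rw [hsing]
            simp
          · by_cases h3 : cls D T e.1 = cls D T e.2
            · rw [hite' (e.1 ∉ T ∧ e.2 ∉ T ∧ cls D T e.1 ≠ cls D T e.2) (by tauto)]
              have hsing : P.filter (fun B => e.1 ∈ B ∪ T ∧ e.2 ∈ B ∪ T)
                  = {cls D T e.1} := by
                ext B
                simp only [Finset.mem_filter, Finset.mem_singleton]
                constructor
                · rintro ⟨hBP, hB1, _⟩
                  exact cls_eq_of_mem_classes hBP ((Finset.mem_union.mp hB1).resolve_right h1)
                · rintro rfl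
                  refine ⟨cls_mem_classes hev.1 h1,
                    Finset.mem_union_left _ (self_mem_cls hev.1 h1),
                    Finset.mem_union_left _ ?_⟩
                  rw [h3]
                  exact self_mem_cls hev.2 h2
              rw [hsing]
              simp
            · rw [hite (e.1 ∉ T ∧ e.2 ∉ T ∧ cls D T e.1 ≠ cls D T e.2) ⟨h1, h2, h3⟩]
              have hemp : P.filter (fun B => e.1 ∈ B ∪ T ∧ e.2 ∈ B ∪ T) = ∅ := by
                rw [Finset.filter_eq_empty_iff]
                rintro B hBP ⟨hB1, hB2⟩
                exact h3 ((cls_eq_of_mem_classes hBP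
                    ((Finset.mem_union.mp hB1).resolve_right h1)).symm.trans
                  (cls_eq_of_mem_classes hBP ((Finset.mem_union.mp hB2).resolve_right h2)))
              rw [hemp]
              simp
      calc (∑ B ∈ P, (child D T B).arcs.card)
            + (D.arcs.filter
              (fun e => e.1 ∉ T ∧ e.2 ∉ T ∧ cls D T e.1 ≠ cls D T e.2)).card
          = ∑ e ∈ D.arcs, ((P.filter (fun B => e.1 ∈ B ∪ T ∧ e.2 ∈ B ∪ T)).card
              + (if e.1 ∉ T ∧ e.2 ∉ T ∧ cls D T e.1 ≠ cls D T e.2 then 1 else 0)) := by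
            rw [hswap, Finset.card_filter, ← Finset.sum_add_distrib]
        _ = ∑ e ∈ D.arcs, (1 + (P.card - 1) * (if e.1 ∈ T ∧ e.2 ∈ T then 1 else 0)) :=
            Finset.sum_congr rfl hpt
        _ = D.arcs.card + (P.card - 1)
              * (D.arcs.filter (fun e => e.1 ∈ T ∧ e.2 ∈ T)).card := by
            rw [Finset.sum_add_distrib, ← Finset.mul_sum, ← Finset.card_filter,
              Finset.sum_const, smul_eq_mul, mul_one]

    -- (3a): non-T child bad pairs inject into badset D
    have h3a : ∑ B ∈ P, ((badset k (child D T B)).filter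
          (fun e => ¬(e.1 ∈ T ∧ e.2 ∈ T))).card
        ≤ ((badset k D).filter (fun e => ¬(e.1 ∈ T ∧ e.2 ∈ T)
            ∧ ¬(e.1 ∉ T ∧ e.2 ∉ T ∧ cls D T e.1 ≠ cls D T e.2))).card := by
      rw [← Finset.card_biUnion]
      · apply Finset.card_le_card
        intro e he
        rw [Finset.mem_biUnion] at he
        obtain ⟨B, hB, heB⟩ := he
        rw [Finset.mem_filter] at heB
        obtain ⟨heB, hnT⟩ := heB
        have hmem := badchild_noT_mem_badset hT hTcard hB hno heB hnT
        rw [Finset.mem_filter]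
        refine ⟨hmem, hnT, ?_⟩
        obtain ⟨hmiss, h1, h2⟩ := badchild_missing hT hB heB
        rintro ⟨hx, hy, hcls⟩
        have hxB : e.1 ∈ B := (Finset.mem_union.mp h1).resolve_right hx
        have hyB : e.2 ∈ B := (Finset.mem_union.mp h2).resolve_right hy
        exact hcls ((cls_eq_of_mem_classes hB hxB).symm.trans (cls_eq_of_mem_classes hB hyB))
      · intro B hB B' hB' hne
        rw [Function.onFun, Finset.disjoint_left]
        intro e heB heB'
        rw [Finset.mem_filter] at heB heB'
        obtain ⟨hm1, h1, h2⟩ := badchild_missing hT hB heB.1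
        obtain ⟨hm1', h1', h2'⟩ := badchild_missing hT hB' heB'.1
        rcases not_and_or.mp heB.2 with hx | hy
        · exact hne (classes_disjoint hB hB' ((Finset.mem_union.mp h1).resolve_right hx)
            ((Finset.mem_union.mp h1').resolve_right hx))
        · exact hne (classes_disjoint hB hB' ((Finset.mem_union.mp h2).resolve_right hy)
            ((Finset.mem_union.mp h2').resolve_right hy))
    -- (3b): T-internal child bad pairs
    have h3b : ∑ B ∈ P, ((badset k (child D T B)).filter
          (fun e => e.1 ∈ T ∧ e.2 ∈ T)).card
        ≤ (P.card - 1) * (T.offDiag.filter (fun e => e ∉ D.arcs)).card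
          + ((badset k D).filter (fun e => e.1 ∈ T ∧ e.2 ∈ T)).card := by
      have hstep1 : ∀ B ∈ P, (badset k (child D T B)).filter (fun e => e.1 ∈ T ∧ e.2 ∈ T)
          = (T.offDiag.filter (fun e => e ∉ D.arcs)).filter
              (fun q => q ∈ badset k (child D T B)) := by
        intro B hB
        ext e
        simp only [Finset.mem_filter, Finset.mem_offDiag]
        constructor
        · rintro ⟨he, h1, h2⟩
          obtain ⟨hmiss, _, _⟩ := badchild_missing hT hB he
          exact ⟨⟨⟨h1, h2, hmiss.2.2.1⟩, hmiss.2.2.2⟩, he⟩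
        · rintro ⟨⟨⟨h1, h2, _⟩, _⟩, he⟩
          exact ⟨he, h1, h2⟩
      calc ∑ B ∈ P, ((badset k (child D T B)).filter (fun e => e.1 ∈ T ∧ e.2 ∈ T)).card
          = ∑ B ∈ P, ((T.offDiag.filter (fun e => e ∉ D.arcs)).filter
              (fun q => q ∈ badset k (child D T B))).card :=
            Finset.sum_congr rfl (fun B hB => by rw [hstep1 B hB])
        _ = ∑ q ∈ T.offDiag.filter (fun e => e ∉ D.arcs),
              (P.filter (fun B => q ∈ badset k (child D T B))).card :=
            sum_card_filter_swap P _ _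
        _ ≤ ∑ q ∈ T.offDiag.filter (fun e => e ∉ D.arcs),
            ((P.card - 1) + (if q ∈ (badset k D).filter (fun e => e.1 ∈ T ∧ e.2 ∈ T)
              then 1 else 0)) := by
            refine Finset.sum_le_sum ?_
            intro q hq
            rw [Finset.mem_filter, Finset.mem_offDiag] at hq
            by_cases hbad : q ∈ badset k D
            · have hle : (P.filter (fun B => q ∈ badset k (child D T B))).card ≤ P.card :=
                Finset.card_le_card (Finset.filter_subset _ _)
              rw [if_pos (Finset.mem_filter.mpr ⟨hbad, hq.1.1, hq.1.2.1⟩)]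
              omega
            · have hmiss : D.MissingArc q.1 q.2 :=
                ⟨hT hq.1.1, hT hq.1.2.1, hq.1.2.2, hq.2⟩
              have hcr : Creates k D q.1 q.2 := by
                by_contra hnc
                exact hbad (mem_badset.mpr ⟨hmiss, hnc⟩)
              obtain ⟨B₀, hB₀, hcr₀, -, -⟩ :=
                loc_main hT (by omega) hmiss hcr hno (Or.inl hq.1.1)
              have hB₀' : B₀ ∈ P := by rw [hP]; exact hB₀
              have hsub : P.filter (fun B => q ∈ badset k (child D T B)) ⊆ P.erase B₀ := by
                intro B hBf
                rw [Finset.mem_filter] at hBf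
                rw [Finset.mem_erase]
                refine ⟨?_, hBf.1⟩
                rintro rfl
                exact (mem_badset.mp hBf.2).2 hcr₀
              have hle := Finset.card_le_card hsub
              rw [Finset.card_erase_of_mem hB₀'] at hle
              rw [if_neg (fun hc => hbad (Finset.mem_filter.mp hc).1)]
              omega
        _ ≤ (P.card - 1) * (T.offDiag.filter (fun e => e ∉ D.arcs)).card
              + ((badset k D).filter (fun e => e.1 ∈ T ∧ e.2 ∈ T)).card := by
            rw [Finset.sum_add_distrib, Finset.sum_const, smul_eq_mul, mul_comm]
            have h2 : ∑ q ∈ T.offDiag.filter (fun e => e ∉ D.arcs),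
                (if q ∈ (badset k D).filter (fun e => e.1 ∈ T ∧ e.2 ∈ T) then 1 else 0)
                = ((T.offDiag.filter (fun e => e ∉ D.arcs)).filter
                    (fun q => q ∈ (badset k D).filter (fun e => e.1 ∈ T ∧ e.2 ∈ T))).card :=
              (Finset.card_filter _ _).symm
            rw [h2]
            have h3 : ((T.offDiag.filter (fun e => e ∉ D.arcs)).filter
                (fun q => q ∈ (badset k D).filter (fun e => e.1 ∈ T ∧ e.2 ∈ T))).card
                ≤ ((badset k D).filter (fun e => e.1 ∈ T ∧ e.2 ∈ T)).card :=
              Finset.card_le_card (fun q hq => (Finset.mem_filter.mp hq).2)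
            omega
    -- name the pieces
    set CA := D.arcs.filter
      (fun e => e.1 ∉ T ∧ e.2 ∉ T ∧ cls D T e.1 ≠ cls D T e.2) with hCA
    set CB := (badset k D).filter
      (fun e => e.1 ∉ T ∧ e.2 ∉ T ∧ cls D T e.1 ≠ cls D T e.2) with hCB
    set BT := (badset k D).filter (fun e => e.1 ∈ T ∧ e.2 ∈ T) with hBT
    set BM := (badset k D).filter (fun e => ¬(e.1 ∈ T ∧ e.2 ∈ T)
      ∧ ¬(e.1 ∉ T ∧ e.2 ∉ T ∧ cls D T e.1 ≠ cls D T e.2)) with hBM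
    -- (4): three disjoint parts of badset D
    have h4 : BM.card + BT.card + CB.card ≤ (badset k D).card := by
      have d12 : Disjoint BM BT := by
        rw [hBM, hBT, Finset.disjoint_filter]
        tauto
      have d13 : Disjoint BM CB := by
        rw [hBM, hCB, Finset.disjoint_filter]
        tauto
      have d23 : Disjoint BT CB := by
        rw [hBT, hCB, Finset.disjoint_filter]
        tauto
      calc BM.card + BT.card + CB.card = (BM ∪ BT ∪ CB).card := by
            rw [Finset.card_union_of_disjoint, Finset.card_union_of_disjoint d12]
            rw [Finset.disjoint_union_left]
            exact ⟨d13, d23⟩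
        _ ≤ (badset k D).card := by
            apply Finset.card_le_card
            intro e he
            rw [Finset.mem_union, Finset.mem_union] at he
            rcases he with (he | he) | he
            · exact (Finset.mem_filter.mp (hBM ▸ he)).1
            · exact (Finset.mem_filter.mp (hBT ▸ he)).1
            · exact (Finset.mem_filter.mp (hCB ▸ he)).1
    -- (5): cross coverage
    have h5 : ((W ×ˢ W).filter (fun q => ¬ (cls D T q.1 = cls D T q.2))).card
        ≤ 2 * (CA.card + CB.card) := by
      have hcov : (W ×ˢ W).filter (fun q => ¬ (cls D T q.1 = cls D T q.2))
          ⊆ (CA ∪ CB) ∪ (CA ∪ CB).image Prod.swap := by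
        intro q hq
        rw [Finset.mem_filter, Finset.mem_product] at hq
        obtain ⟨⟨h1, h2⟩, hcls⟩ := hq
        obtain ⟨h1v, h1T⟩ := Finset.mem_sdiff.mp (hW ▸ h1)
        obtain ⟨h2v, h2T⟩ := Finset.mem_sdiff.mp (hW ▸ h2)
        have hne : q.1 ≠ q.2 := fun h => hcls (by rw [h])
        by_cases ha1 : (q.1, q.2) ∈ D.arcs
        · apply Finset.mem_union_left
          apply Finset.mem_union_left
          rw [hCA]
          exact Finset.mem_filter.mpr ⟨ha1, h1T, h2T, hcls⟩
        · by_cases ha2 : (q.2, q.1) ∈ D.arcs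
          · apply Finset.mem_union_right
            rw [Finset.mem_image]
            refine ⟨(q.2, q.1), ?_, rfl⟩
            apply Finset.mem_union_left
            rw [hCA]
            exact Finset.mem_filter.mpr ⟨ha2, h2T, h1T, fun h => hcls h.symm⟩
          · have hm1 : D.MissingArc q.1 q.2 := ⟨h1v, h2v, hne, ha1⟩
            have hm2 : D.MissingArc q.2 q.1 := ⟨h2v, h1v, hne.symm, ha2⟩
            have hkey : ¬ Creates k D q.1 q.2 ∨ ¬ Creates k D q.2 q.1 := by
              by_contra hc
              push_neg at hc
              obtain ⟨hc1, hc2⟩ := hc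
              have hr1 := loc_reach (k := k) (by omega) hm1 hc1 hno h1T h2T
              have hr2 := loc_reach (k := k) (by omega) hm2 hc2 hno h2T h1T
              exact hcls (cls_eq_of_mem (mem_cls.mpr ⟨⟨h2v, h2T⟩, hr2, hr1⟩))
            rcases hkey with hnc | hnc
            · apply Finset.mem_union_left
              apply Finset.mem_union_right
              rw [hCB]
              exact Finset.mem_filter.mpr ⟨mem_badset.mpr ⟨hm1, hnc⟩, h1T, h2T, hcls⟩
            · apply Finset.mem_union_right
              rw [Finset.mem_image]
              refine ⟨(q.2, q.1), ?_, rfl⟩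
              apply Finset.mem_union_right
              rw [hCB]
              exact Finset.mem_filter.mpr ⟨mem_badset.mpr ⟨hm2, hnc⟩, h2T, h1T,
                fun h => hcls h.symm⟩
      have hc1 := Finset.card_le_card hcov
      have hc2 := Finset.card_union_le (CA ∪ CB) ((CA ∪ CB).image Prod.swap)
      have hc3 := Finset.card_image_le (s := CA ∪ CB) (f := Prod.swap)
      have hc4 := Finset.card_union_le CA CB
      omega
    -- class sums
    have hsame : ((W ×ˢ W).filter (fun q => cls D T q.1 = cls D T q.2)).card
        = ∑ B ∈ P, B.card * B.card := by
      have heq : (W ×ˢ W).filter (fun q => cls D T q.1 = cls D T q.2)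
          = P.biUnion (fun B => B ×ˢ B) := by
        ext q
        simp only [Finset.mem_filter, Finset.mem_product, Finset.mem_biUnion]
        constructor
        · rintro ⟨⟨h1, h2⟩, hcls⟩
          obtain ⟨h1v, h1T⟩ := Finset.mem_sdiff.mp (hW ▸ h1)
          obtain ⟨h2v, h2T⟩ := Finset.mem_sdiff.mp (hW ▸ h2)
          refine ⟨cls D T q.1, ?_, self_mem_cls h1v h1T, ?_⟩
          · rw [hP]; exact cls_mem_classes h1v h1T
          · rw [hcls]; exact self_mem_cls h2v h2T
        · rintro ⟨B, hB, hq1, hq2⟩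
          have hB' : B ∈ classes D T := hP ▸ hB
          refine ⟨⟨hBW B hB hq1, hBW B hB hq2⟩, ?_⟩
          rw [← cls_eq_of_mem_classes hB' hq1, ← cls_eq_of_mem_classes hB' hq2]
      rw [heq, Finset.card_biUnion]
      · exact Finset.sum_congr rfl (fun B _ => Finset.card_product B B)
      · intro B hB B' hB' hne
        rw [Function.onFun, Finset.disjoint_left]
        intro q hq hq'
        exact hne (classes_disjoint (hP ▸ hB) (hP ▸ hB')
          (Finset.mem_product.mp hq).1 (Finset.mem_product.mp hq').1)
    have hsplit : ((W ×ˢ W).filter (fun q => cls D T q.1 = cls D T q.2)).card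
        + ((W ×ˢ W).filter (fun q => ¬ (cls D T q.1 = cls D T q.2))).card = m * m := by
      rw [Finset.card_filter_add_card_filter_not, Finset.card_product, ← hm]
    -- arithmetic expansions
    have hTc : T.card = k - 1 := by omega
    have hE : ∑ B ∈ P, target k (B.card + T.card)
        ≤ ∑ B ∈ P, (child D T B).arcs.card + ∑ B ∈ P, (badset k (child D T B)).card := by
      rw [← Finset.sum_add_distrib]
      exact Finset.sum_le_sum hIH
    have hSTexp : ∑ B ∈ P, target k (B.card + T.card)
        = (∑ B ∈ P, B.card.choose 2) + 2 * (k - 1) * m + P.card * ((k - 1) * (k - 2)) := by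
      have hpt2 : ∀ B ∈ P, target k (B.card + T.card)
          = B.card.choose 2 + (2 * (k - 1) * B.card + (k - 1) * (k - 2)) := by
        intro B hB
        rw [hTc]
        exact target_child k B.card hk (hBpos B hB)
      rw [Finset.sum_congr rfl hpt2, Finset.sum_add_distrib, Finset.sum_add_distrib,
        ← Finset.mul_sum, hS1, Finset.sum_const, smul_eq_mul]
      ring
    have hSC2 : 2 * (∑ B ∈ P, B.card.choose 2) + m = ∑ B ∈ P, B.card * B.card := by
      rw [Finset.mul_sum, ← hS1, ← Finset.sum_add_distrib]
      exact Finset.sum_congr rfl (fun B _ => choose_sq B.card)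
    have hmge : 2 ≤ m := by omega
    have hn' : D.verts.card = m + (k - 1) := by omega
    have htarg : 2 * target k D.verts.card + m
        = m * m + 2 * (2 * (k - 1) * m) + 2 * ((k - 1) * (k - 2)) := by
      rw [hn', target_child k m hk (by omega)]
      have := choose_sq m
      omega
    have hpK : P.card * ((k - 1) * (k - 2))
        = (k - 1) * (k - 2) + (P.card - 1) * ((k - 1) * (k - 2)) := by
      obtain ⟨pm, hpm⟩ : ∃ pm, P.card = pm + 1 := ⟨P.card - 1, by omega⟩
      rw [hpm, Nat.add_sub_cancel]
      ring
    have hG : (P.card - 1) * (D.arcs.filter (fun e => e.1 ∈ T ∧ e.2 ∈ T)).card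
        + (P.card - 1) * (T.offDiag.filter (fun e => e ∉ D.arcs)).card
        = (P.card - 1) * ((k - 1) * (k - 2)) := by
      rw [← Nat.left_distrib, hτμ]
    have hSX : ∑ B ∈ P, (badset k (child D T B)).card
        = ∑ B ∈ P, ((badset k (child D T B)).filter (fun e => e.1 ∈ T ∧ e.2 ∈ T)).card
          + ∑ B ∈ P, ((badset k (child D T B)).filter
              (fun e => ¬(e.1 ∈ T ∧ e.2 ∈ T))).card := by
      rw [← Finset.sum_add_distrib]
      refine Finset.sum_congr rfl (fun B _ => ?_)
      exact (Finset.card_filter_add_card_filter_not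
        (p := fun e : ℕ × ℕ => e.1 ∈ T ∧ e.2 ∈ T)).symm
    omega

end

end DSat
namespace DSat

open Dgraph Finset
open scoped Classical

noncomputable section

/-- The extremal construction: `k-1` hub vertices joined both ways to everything,
and a transitive tournament on the rest. -/
def Dex (k n : ℕ) : Dgraph where
  verts := Finset.range n
  arcs := (Finset.range n).offDiag.filter
    (fun e => e.1 < k - 1 ∨ e.2 < k - 1 ∨ e.1 < e.2)
  arcs_mem := by
    intro e he
    have h := Finset.mem_offDiag.mp (Finset.mem_filter.mp he).1
    exact ⟨h.1, h.2.1⟩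
  no_loops := fun e he => (Finset.mem_offDiag.mp (Finset.mem_filter.mp he).1).2.2

lemma mem_Dex_arcs {k n : ℕ} {e : ℕ × ℕ} :
    e ∈ (Dex k n).arcs ↔ (e.1 < n ∧ e.2 < n ∧ e.1 ≠ e.2)
      ∧ (e.1 < k - 1 ∨ e.2 < k - 1 ∨ e.1 < e.2) := by
  simp [Dex, Finset.mem_offDiag]

lemma completeOn_arc {S : Finset ℕ} {a b : ℕ} (ha : a ∈ S) (hb : b ∈ S) (hab : a ≠ b) :
    (a, b) ∈ (completeOn S).arcs := by
  simp only [completeOn, Finset.mem_filter, Finset.mem_product]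
  exact ⟨⟨ha, hb⟩, hab⟩

lemma completeOn_kstrong {k : ℕ} {S : Finset ℕ} (h : S.card = k + 1) :
    (completeOn S).KStrong k := by
  constructor
  · simpa [completeOn] using h.ge
  · intro Sd hSd a ha b hb
    rw [delete_verts] at ha hb
    by_cases hab : a = b
    · subst hab; exact .refl
    · refine Relation.ReflTransGen.single ?_
      rw [mem_delete_arcs]
      have haS := Finset.mem_sdiff.mp ha
      have hbS := Finset.mem_sdiff.mp hb
      exact ⟨completeOn_arc haS.1 hbS.1 hab, haS.2, hbS.2⟩

lemma reach_le {r : ℕ → ℕ → Prop} (h : ∀ a b, r a b → a < b) {a b : ℕ}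
    (hr : Relation.ReflTransGen r a b) : a ≤ b := by
  induction hr with
  | refl => exact le_rfl
  | tail _ hstep ih => exact le_trans ih (le_of_lt (h _ _ hstep))

lemma Dex_no_kstrong {k n : ℕ} (hk : 1 ≤ k) :
    ∀ H : Dgraph, H.IsSubdigraph (Dex k n) → ¬ H.KStrong k := by
  intro H hs hK
  have hSh : ((Finset.range (k - 1)) ∩ H.verts).card ≤ k - 1 :=
    le_trans (Finset.card_le_card Finset.inter_subset_left) (by simp)
  have hSC := hK.2 ((Finset.range (k - 1)) ∩ H.verts) (by omega)
  have hcard : 2 ≤ (H.verts \ ((Finset.range (k - 1)) ∩ H.verts)).card := by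
    have h1 := Finset.card_le_card_sdiff_add_card (s := H.verts)
      (t := (Finset.range (k - 1)) ∩ H.verts)
    have h2 := hK.1
    omega
  have h2lt : 1 < (H.verts \ ((Finset.range (k - 1)) ∩ H.verts)).card := by omega
  obtain ⟨a, ha, b, hb, hab⟩ := Finset.one_lt_card.mp h2lt
  have hnh : ∀ x ∈ H.verts \ ((Finset.range (k - 1)) ∩ H.verts), ¬ (x < k - 1) := by
    intro x hx hxlt
    have hx' := Finset.mem_sdiff.mp hx
    exact hx'.2 (Finset.mem_inter.mpr ⟨Finset.mem_range.mpr hxlt, hx'.1⟩)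
  have hup : ∀ p q : ℕ, (p, q) ∈ (H.delete ((Finset.range (k - 1)) ∩ H.verts)).arcs
      → p < q := by
    intro p q hpq
    rw [mem_delete_arcs] at hpq
    have hmem := H.arcs_mem _ hpq.1
    have hD := hs.2 hpq.1
    rw [mem_Dex_arcs] at hD
    have h1 : ¬ (p < k - 1) := hnh p (Finset.mem_sdiff.mpr ⟨hmem.1, hpq.2.1⟩)
    have h2 : ¬ (q < k - 1) := hnh q (Finset.mem_sdiff.mpr ⟨hmem.2, hpq.2.2⟩)
    tauto
  have hr1 : a ≤ b := reach_le hup (hSC a (by rw [delete_verts]; exact ha)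
    b (by rw [delete_verts]; exact hb))
  have hr2 : b ≤ a := reach_le hup (hSC b (by rw [delete_verts]; exact hb)
    a (by rw [delete_verts]; exact ha))
  exact hab (le_antisymm hr1 hr2)

lemma Dex_sat2 {k n : ℕ} (hk : 1 ≤ k) (hkn : k ≤ n) :
    ∀ u v : ℕ, (Dex k n).MissingArc u v →
      ∃ H : Dgraph, H.IsSubdigraph ((Dex k n).addArc u v) ∧ H.KStrong k := by
  intro u v hm
  obtain ⟨hu, hv, hne, hnin⟩ := hm
  have hu' : u < n := Finset.mem_range.mp hu
  have hv' : v < n := Finset.mem_range.mp hv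
  have hprops : ¬ (u < k - 1) ∧ ¬ (v < k - 1) ∧ ¬ (u < v) := by
    by_contra hc
    refine hnin (mem_Dex_arcs.mpr ⟨⟨hu', hv', hne⟩, ?_⟩)
    tauto
  have hvu : v < u := by omega
  have hunR : u ∉ insert v (Finset.range (k - 1)) := by
    simp only [Finset.mem_insert, Finset.mem_range]
    push_neg
    exact ⟨hne, by omega⟩
  have hvnR : v ∉ Finset.range (k - 1) := by
    simp only [Finset.mem_range]
    exact hprops.2.1
  refine ⟨completeOn (insert u (insert v (Finset.range (k - 1)))), ⟨?_, ?_⟩,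
    completeOn_kstrong ?_⟩
  · rw [addArc_verts]
    intro x hx
    simp only [completeOn, Finset.mem_insert, Finset.mem_range] at hx
    rcases hx with rfl | rfl | hx
    · exact hu
    · exact hv
    · exact Finset.mem_range.mpr (by omega)
  · intro e he
    simp only [completeOn, Finset.mem_filter, Finset.mem_product, Finset.mem_insert,
      Finset.mem_range] at he
    obtain ⟨⟨he1, he2⟩, hene⟩ := he
    rw [addArc_arcs _ hu hv hne, Finset.mem_insert]
    by_cases heq : e = (u, v)
    · exact Or.inl heq
    · right
      have he1n : e.1 < n := by rcases he1 with rfl | rfl | h <;> omega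
      have he2n : e.2 < n := by rcases he2 with rfl | rfl | h <;> omega
      refine mem_Dex_arcs.mpr ⟨⟨he1n, he2n, hene⟩, ?_⟩
      rcases he1 with h1 | h1 | h1
      · rcases he2 with h2 | h2 | h2
        · exact absurd (h1.trans h2.symm) hene
        · exact absurd (Prod.ext h1 h2) heq
        · exact Or.inr (Or.inl h2)
      · rcases he2 with h2 | h2 | h2
        · exact Or.inr (Or.inr (by omega))
        · exact absurd (h1.trans h2.symm) hene
        · exact Or.inr (Or.inl h2)
      · exact Or.inl h1
  · rw [Finset.card_insert_of_notMem hunR, Finset.card_insert_of_notMem hvnR,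
      Finset.card_range]
    omega

lemma total_identity (k n : ℕ) (hk : 1 ≤ k) (hkn : k ≤ n) :
    n * n - n = (n - k + 1).choose 2 + target k n := by
  rw [target]
  obtain ⟨c, rfl⟩ : ∃ c, k = c + 1 := ⟨k - 1, by omega⟩
  obtain ⟨d, rfl⟩ : ∃ d, n = (c + 1) + d := ⟨n - (c + 1), by omega⟩
  have h1 : (c + 1) + d - (c + 1) + 1 = d + 1 := by omega
  have h2 : c + 1 - 1 = c := by omega
  have h3 : 2 * ((c + 1) + d) - (c + 1) = c + 2 * d + 1 := by omega
  rw [h1, h2, h3]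
  have h4 := two_mul_choose_two (d + 1)
  have h5 : (d + 1) - 1 = d := by omega
  rw [h5] at h4
  have h6 : (c + 1 + d) * (c + 1 + d) = ((d + 1) * d + c * (c + 2 * d + 1)) + (c + 1 + d)
      := by ring
  omega

lemma miss_card (k n : ℕ) (hk : 1 ≤ k) (hkn : k ≤ n) :
    ((Finset.range n).offDiag.filter
      (fun e => ¬(e.1 < k - 1 ∨ e.2 < k - 1 ∨ e.1 < e.2))).card
    = (n - k + 1).choose 2 := by
  have heq : (Finset.range n).offDiag.filter
      (fun e => ¬(e.1 < k - 1 ∨ e.2 < k - 1 ∨ e.1 < e.2))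
      = (Finset.range n).biUnion (fun i => ({i} ×ˢ Finset.Ico (k - 1) i)) := by
    ext e
    simp only [Finset.mem_filter, Finset.mem_offDiag, Finset.mem_biUnion, Finset.mem_range,
      Finset.mem_product, Finset.mem_singleton, Finset.mem_Ico]
    constructor
    · rintro ⟨⟨h1, h2, hne⟩, hp⟩
      push_neg at hp
      exact ⟨e.1, h1, rfl, by omega⟩
    · rintro ⟨i, hi, h1i, hj⟩
      constructor
      · exact ⟨by omega, by omega, by omega⟩
      · push_neg
        exact ⟨by omega, by omega, by omega⟩
  rw [heq, Finset.card_biUnion]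
  · have hc : ∀ i ∈ Finset.range n, ({i} ×ˢ Finset.Ico (k - 1) i).card = i - (k - 1) := by
      intro i _
      rw [Finset.card_product, Finset.card_singleton, Nat.card_Ico, one_mul]
    rw [Finset.sum_congr rfl hc]
    have hss : ∑ i ∈ Finset.range n, (i - (k - 1)) = ∑ i ∈ Finset.Ico (k - 1) n,
        (i - (k - 1)) := by
      refine (Finset.sum_subset ?_ ?_).symm
      · intro x hx
        rw [Finset.mem_Ico] at hx
        exact Finset.mem_range.mpr hx.2
      · intro x hx hnx
        rw [Finset.mem_range] at hx
        rw [Finset.mem_Ico] at hnx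
        omega
    rw [hss, Finset.sum_Ico_eq_sum_range]
    have hcg : ∀ j ∈ Finset.range (n - (k - 1)), (k - 1) + j - (k - 1) = j := by
      intro j _
      omega
    rw [Finset.sum_congr rfl hcg, Finset.sum_range_id, Nat.choose_two_right]
    have hq : n - (k - 1) = n - k + 1 := by omega
    rw [hq]
  · intro i hi j hj hij
    rw [Function.onFun, Finset.disjoint_left]
    intro q hq hq'
    rw [Finset.mem_product, Finset.mem_singleton] at hq hq'
    exact hij (hq.1.symm.trans hq'.1)

lemma Dex_card (k n : ℕ) (hk : 1 ≤ k) (hkn : k ≤ n) :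
    (Dex k n).arcs.card = target k n := by
  have h1 : (Dex k n).arcs.card + ((Finset.range n).offDiag.filter
      (fun e => ¬(e.1 < k - 1 ∨ e.2 < k - 1 ∨ e.1 < e.2))).card
      = (Finset.range n).offDiag.card :=
    Finset.card_filter_add_card_filter_not
      (p := fun e : ℕ × ℕ => e.1 < k - 1 ∨ e.2 < k - 1 ∨ e.1 < e.2)
  rw [Finset.offDiag_card, Finset.card_range] at h1
  have h2 := miss_card k n hk hkn
  have h3 := total_identity k n hk hkn
  omega

end

end DSat
open Dgraph
/-- The saturation number: for `k ≥ 1` and `n ≥ k`, the minimum number of arcs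
of an `n`-vertex `𝒟ₖ`-saturated digraph is `C(n-k+1, 2) + (k-1)(2n-k)`. -/
theorem stmt11 (k n : ℕ) (hk : 1 ≤ k) (hn : k ≤ n) :
    IsLeast {m : ℕ | ∃ D : Dgraph, D.verts.card = n ∧ D.DSaturated k ∧
        D.arcs.card = m}
      ((n - k + 1).choose 2 + (k - 1) * (2 * n - k)) := by
  constructor
  · refine ⟨DSat.Dex k n, by simp [DSat.Dex], ⟨DSat.Dex_no_kstrong hk, DSat.Dex_sat2 hk hn⟩,
      DSat.Dex_card k n hk hn⟩
  · rintro mval ⟨D, hcard, hsat, rfl⟩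
    have hlower := DSat.lower k hk D.verts.card D rfl (by omega) hsat.1
    have hempty : DSat.badset k D = ∅ := by
      rw [Finset.eq_empty_iff_forall_notMem]
      intro e he
      rw [DSat.mem_badset] at he
      exact he.2 (hsat.2 e.1 e.2 he.1)
    rw [hempty, hcard] at hlower
    simpa [DSat.target] using hlower
end

section
/- Let k ≥ 2 and n ≥ 2(k−1) with n = t(k−1) + r, 0 ≤ r < k−1. Every digraph D in the family 𝒟_U(n,k) is Dₖ-saturated. -/
namespace Dgraph

/-- A complete digraph on at least `k+1` vertices is `k`-strong. -/
lemma completeOn_kstrong (W : Finset ℕ) (k : ℕ) (h : k + 1 ≤ W.card) :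
    (completeOn W).KStrong k := by
  refine ⟨h, ?_⟩
  intro S _ x hx y hy
  have hx' : x ∈ W \ S := hx
  have hy' : y ∈ W \ S := hy
  rw [Finset.mem_sdiff] at hx' hy'
  rcases eq_or_ne x y with rfl | hne
  · exact Relation.ReflTransGen.refl
  · refine Relation.ReflTransGen.single ?_
    show (x, y) ∈ ((completeOn W).arcs).filter _
    refine Finset.mem_filter.mpr ⟨?_, hx'.2, hy'.2⟩
    exact Finset.mem_filter.mpr ⟨Finset.mem_product.mpr ⟨hx'.1, hy'.1⟩, hne⟩

end Dgraph

open Dgraph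
/-- Every member of the family `𝒟_U(n,k)` is `𝒟ₖ`-saturated. -/
theorem stmt12 (k n t r : ℕ) (hk : 2 ≤ k) (hn : 2 * (k - 1) ≤ n)
    (hntr : n = t * (k - 1) + r) (hr : r < k - 1)
    (D : Dgraph) (hcard : D.verts.card = n)
    (V : ℕ → Finset ℕ)
    (hcover : D.verts = (Finset.range (t + 1)).biUnion V)
    (hdisj : ∀ i ≤ t, ∀ j ≤ t, i ≠ j → Disjoint (V i) (V j))
    (hVcard : ∀ i < t, (V i).card = k - 1) (hVt : (V t).card = r)
    (hV0tour : ∀ u ∈ V 0, ∀ v ∈ V 0, u ≠ v →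
      ((u, v) ∈ D.arcs ↔ (v, u) ∉ D.arcs))
    (hV0trans : ∀ x ∈ V 0, ∀ y ∈ V 0, ∀ z ∈ V 0,
      (x, y) ∈ D.arcs → (y, z) ∈ D.arcs → (x, z) ∈ D.arcs)
    (hVicomplete : ∀ i, 1 ≤ i → i ≤ t →
      ∀ u ∈ V i, ∀ v ∈ V i, u ≠ v → (u, v) ∈ D.arcs)
    (hV0Vi : ∀ u ∈ V 0, ∀ i, 1 ≤ i → i ≤ t → ∀ v ∈ V i,
      (u, v) ∈ D.arcs ∧ (v, u) ∈ D.arcs)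
    (hViVj : ∀ i j, 1 ≤ i → i < j → j ≤ t → ∀ u ∈ V i, ∀ v ∈ V j,
      (u, v) ∈ D.arcs ∧ (v, u) ∉ D.arcs) :
    D.DSaturated k := by
  have hk1 : 1 ≤ k - 1 := by omega
  have ht2 : 2 ≤ t := by
    by_contra h
    push_neg at h
    have : t * (k - 1) ≤ 1 * (k - 1) := Nat.mul_le_mul_right _ (by omega)
    omega
  have hVsub : ∀ c, c ≤ t → V c ⊆ D.verts := by
    intro c hc
    rw [hcover]
    exact Finset.subset_biUnion_of_mem V (Finset.mem_range.mpr (by omega))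
  have hidx : ∀ x ∈ D.verts, ∃ c, c ≤ t ∧ x ∈ V c := by
    intro x hx
    rw [hcover] at hx
    obtain ⟨c, hc, hxc⟩ := Finset.mem_biUnion.mp hx
    exact ⟨c, Nat.lt_succ_iff.mp (Finset.mem_range.mp hc), hxc⟩
  have hScard : ∀ i, i ≤ t → (V i).card ≤ k - 1 := by
    intro i hi
    rcases eq_or_lt_of_le hi with rfl | h
    · rw [hVt]; omega
    · rw [hVcard i h]
  constructor
  · -- Part 1: no k-strong subdigraph
    intro H hH hKS
    obtain ⟨hcard1, hstrong⟩ := hKS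
    by_cases hcase : ∃ x ∈ H.verts, ∃ y ∈ H.verts, ∃ i j, 1 ≤ i ∧ i < j ∧ j ≤ t ∧ x ∈ V i ∧ y ∈ V j
    · obtain ⟨x, hx, y, hy, i, j, hi1, hij, hjt, hxi, hyj⟩ := hcase
      have hx0 : x ∉ V 0 := fun h0 =>
        Finset.disjoint_left.mp (hdisj 0 (by omega) i (by omega) (by omega)) h0 hxi
      have hy0 : y ∉ V 0 := fun h0 =>
        Finset.disjoint_left.mp (hdisj 0 (by omega) j (by omega) (by omega)) h0 hyj
      have hsc := hstrong (V 0) (by rw [hVcard 0 (by omega)]; omega)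
      have hyv : y ∈ (H.delete (V 0)).verts := Finset.mem_sdiff.mpr ⟨hy, hy0⟩
      have hxv : x ∈ (H.delete (V 0)).verts := Finset.mem_sdiff.mpr ⟨hx, hx0⟩
      have hreach : (H.delete (V 0)).Reach y x := hsc y hyv x hxv
      have key : ∀ z, Relation.ReflTransGen (fun a b => (a, b) ∈ (H.delete (V 0)).arcs) y z →
          ∃ c, j ≤ c ∧ c ≤ t ∧ z ∈ V c := by
        intro z hz
        induction hz with
        | refl => exact ⟨j, le_refl j, hjt, hyj⟩
        | @tail b z hyb harc ih =>
          obtain ⟨c, hjc, hct, hbc⟩ := ih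
          have harc' : (b, z) ∈ H.arcs ∧ b ∉ V 0 ∧ z ∉ V 0 := by
            have := Finset.mem_filter.mp harc
            exact ⟨this.1, this.2⟩
          have hbzD : (b, z) ∈ D.arcs := hH.2 harc'.1
          obtain ⟨d, hdt, hzd⟩ := hidx z (D.arcs_mem _ hbzD).2
          have hd1 : 1 ≤ d := by
            rcases Nat.eq_zero_or_pos d with rfl | hp
            · exact absurd hzd harc'.2.2
            · exact hp
          by_cases hdc : d < c
          · exact absurd hbzD (hViVj d c hd1 hdc hct z hzd b hbc).2
          · exact ⟨d, by omega, hdt, hzd⟩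
      obtain ⟨c, hjc, hct, hxc⟩ := key x hreach
      exact absurd hxc
        (Finset.disjoint_left.mp (hdisj i (by omega) c hct (by omega)) hxi)
    · -- all vertices in V 0 ∪ V i for a single i ≥ 1
      have hone : ∃ i, 1 ≤ i ∧ i ≤ t ∧ ∀ y ∈ H.verts, y ∈ V 0 ∨ y ∈ V i := by
        by_cases hex : ∃ x ∈ H.verts, x ∉ V 0
        · obtain ⟨x, hx, hx0⟩ := hex
          obtain ⟨c, hct, hxc⟩ := hidx x (hH.1 hx)
          have hc1 : 1 ≤ c := by
            rcases Nat.eq_zero_or_pos c with rfl | hp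
            · exact absurd hxc hx0
            · exact hp
          refine ⟨c, hc1, hct, ?_⟩
          intro y hy
          by_cases hy0 : y ∈ V 0
          · exact Or.inl hy0
          · obtain ⟨d, hdt, hyd⟩ := hidx y (hH.1 hy)
            have hd1 : 1 ≤ d := by
              rcases Nat.eq_zero_or_pos d with rfl | hp
              · exact absurd hyd hy0
              · exact hp
            rcases lt_trichotomy c d with hcd | hcd | hcd
            · exact absurd ⟨x, hx, y, hy, c, d, hc1, hcd, hdt, hxc, hyd⟩ hcase
            · exact Or.inr (hcd ▸ hyd)
            · exact absurd ⟨y, hy, x, hx, d, c, hd1, hcd, hct, hyd, hxc⟩ hcase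
        · push_neg at hex
          exact ⟨1, le_refl 1, by omega, fun y hy => Or.inl (hex y hy)⟩
      obtain ⟨i, hi1, hit, hsub0⟩ := hone
      have hsc := hstrong (V i) (by have := hScard i hit; omega)
      have h2 : 2 ≤ (H.verts \ V i).card := by
        have h3 := Finset.card_le_card_sdiff_add_card (s := H.verts) (t := V i)
        have := hScard i hit
        omega
      obtain ⟨a, ha, b, hb, hab⟩ := Finset.one_lt_card.mp (show 1 < (H.verts \ V i).card by omega)
      have htrans : Transitive (fun x y => (x, y) ∈ D.arcs ∧ x ∈ V 0 ∧ y ∈ V 0) := by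
        intro x y z hxy hyz
        exact ⟨hV0trans x hxy.2.1 y hxy.2.2 z hyz.2.2 hxy.1 hyz.1, hxy.2.1, hyz.2.2⟩
      have hstep : ∀ x y : ℕ, (x, y) ∈ (H.delete (V i)).arcs →
          (x, y) ∈ D.arcs ∧ x ∈ V 0 ∧ y ∈ V 0 := by
        intro x y hxy
        have hf := Finset.mem_filter.mp hxy
        have hmem := H.arcs_mem _ hf.1
        refine ⟨hH.2 hf.1, ?_, ?_⟩
        · rcases hsub0 x hmem.1 with h | h
          · exact h
          · exact absurd h hf.2.1
        · rcases hsub0 y hmem.2 with h | h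
          · exact h
          · exact absurd h hf.2.2
      have hav : a ∈ (H.delete (V i)).verts := ha
      have hbv : b ∈ (H.delete (V i)).verts := hb
      have hre1 : Relation.ReflTransGen (fun x y => (x, y) ∈ D.arcs ∧ x ∈ V 0 ∧ y ∈ V 0) a b :=
        Relation.ReflTransGen.mono hstep _ _ (hsc a hav b hbv)
      have hre2 : Relation.ReflTransGen (fun x y => (x, y) ∈ D.arcs ∧ x ∈ V 0 ∧ y ∈ V 0) b a :=
        Relation.ReflTransGen.mono hstep _ _ (hsc b hbv a hav)
      rcases hre1.cases_head with heq | ⟨c, hac, hcb⟩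
      · exact hab heq
      · have htg : Relation.TransGen (fun x y => (x, y) ∈ D.arcs ∧ x ∈ V 0 ∧ y ∈ V 0) a a :=
          Relation.TransGen.head' hac (hcb.trans hre2)
        rw [@Relation.transGen_eq_self _ (fun x y => (x, y) ∈ D.arcs ∧ x ∈ V 0 ∧ y ∈ V 0) ⟨fun _ _ _ h1 h2 => htrans h1 h2⟩] at htg
        exact D.no_loops (a, a) htg.1 rfl
  · -- Part 2: saturation
    intro u v huv
    obtain ⟨hu, hv, hne, hnarc⟩ := huv
    have harcs : (D.addArc u v).arcs = insert (u, v) D.arcs := by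
      show (if u ∈ D.verts ∧ v ∈ D.verts ∧ u ≠ v then insert (u, v) D.arcs else D.arcs) = _
      rw [if_pos ⟨hu, hv, hne⟩]
    obtain ⟨a, hat, hua⟩ := hidx u hu
    obtain ⟨b, hbt, hvb⟩ := hidx v hv
    rcases Nat.eq_zero_or_pos a with ha0 | ha1
    · subst ha0
      rcases Nat.eq_zero_or_pos b with hb0 | hb1
      · -- Case B: u, v ∈ V 0
        subst hb0
        have hu1 : u ∉ V 1 :=
          fun h => Finset.disjoint_left.mp (hdisj 0 (by omega) 1 (by omega) (by omega)) hua h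
        have hv1 : v ∉ V 1 :=
          fun h => Finset.disjoint_left.mp (hdisj 0 (by omega) 1 (by omega) (by omega)) hvb h
        refine ⟨completeOn (insert u (insert v (V 1))), ⟨?_, ?_⟩, completeOn_kstrong _ _ ?_⟩
        · intro x hx
          show x ∈ D.verts
          rcases Finset.mem_insert.mp hx with rfl | hx
          · exact hu
          rcases Finset.mem_insert.mp hx with rfl | hx
          · exact hv
          · exact hVsub 1 (by omega) hx
        · intro e he
          have hf := Finset.mem_filter.mp he
          have hp := Finset.mem_product.mp hf.1
          have hne' : e.1 ≠ e.2 := hf.2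
          obtain ⟨x, y⟩ := e
          rw [harcs]
          simp only [Finset.mem_insert] at hp
          rcases hp.1 with rfl | rfl | hx1
          · rcases hp.2 with rfl | rfl | hy1
            · exact absurd rfl hne'
            · exact Finset.mem_insert_self _ _
            · exact Finset.mem_insert_of_mem (hV0Vi x hua 1 (le_refl 1) (by omega) y hy1).1
          · rcases hp.2 with rfl | rfl | hy1
            · exact Finset.mem_insert_of_mem ((hV0tour x hvb y hua (Ne.symm hne)).mpr hnarc)
            · exact absurd rfl hne'
            · exact Finset.mem_insert_of_mem (hV0Vi x hvb 1 (le_refl 1) (by omega) y hy1).1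
          · rcases hp.2 with rfl | rfl | hy1
            · exact Finset.mem_insert_of_mem (hV0Vi y hua 1 (le_refl 1) (by omega) x hx1).2
            · exact Finset.mem_insert_of_mem (hV0Vi y hvb 1 (le_refl 1) (by omega) x hx1).2
            · exact Finset.mem_insert_of_mem
                (hVicomplete 1 (le_refl 1) (by omega) x hx1 y hy1 hne')
        · rw [Finset.card_insert_of_notMem (by
              simp only [Finset.mem_insert]
              push_neg
              exact ⟨hne, hu1⟩),
            Finset.card_insert_of_notMem hv1, hVcard 1 (by omega)]
          omega
      · exact absurd (hV0Vi u hua b hb1 hbt v hvb).1 hnarc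
    · rcases Nat.eq_zero_or_pos b with hb0 | hb1
      · subst hb0
        exact absurd (hV0Vi v hvb a ha1 hat u hua).2 hnarc
      · rcases lt_trichotomy a b with hab | hab | hab
        · exact absurd (hViVj a b ha1 hab hbt u hua v hvb).1 hnarc
        · exact absurd (hVicomplete a ha1 hat u hua v (hab ▸ hvb) hne) hnarc
        · -- Case A: v ∈ V b, u ∈ V a, 1 ≤ b < a ≤ t
          have hbtlt : b < t := by omega
          have hu0 : u ∉ V 0 :=
            fun h => Finset.disjoint_left.mp (hdisj 0 (by omega) a (by omega) (by omega)) h hua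
          have hub : u ∉ V b :=
            fun h => Finset.disjoint_left.mp (hdisj b (by omega) a (by omega) (by omega)) h hua
          have hvb0 : v ∉ V 0 :=
            fun h => Finset.disjoint_left.mp (hdisj 0 (by omega) b (by omega) (by omega)) h hvb
          set W : Finset ℕ := insert u (V 0 ∪ V b) with hW
          have hWsub : W ⊆ D.verts := by
            intro x hx
            rcases Finset.mem_insert.mp hx with rfl | hx
            · exact hu
            rcases Finset.mem_union.mp hx with h | h
            · exact hVsub 0 (by omega) h
            · exact hVsub b (by omega) h
          have hWcard : W.card = 2 * k - 1 := by
            rw [hW, Finset.card_insert_of_notMem (by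
                simp only [Finset.mem_union]
                push_neg
                exact ⟨hu0, hub⟩),
              Finset.card_union_of_disjoint (hdisj 0 (by omega) b (by omega) (by omega)),
              hVcard 0 (by omega), hVcard b hbtlt]
            omega
          have hiverts : ((D.addArc u v).induce W).verts = W := by
            show D.verts ∩ W = W
            exact Finset.inter_eq_right.mpr hWsub
          have huW : u ∈ W := Finset.mem_insert_self _ _
          have hvW : v ∈ W := Finset.mem_insert_of_mem (Finset.mem_union_right _ hvb)
          have hV0W : ∀ z ∈ V 0, z ∈ W := fun z hz =>
            Finset.mem_insert_of_mem (Finset.mem_union_left _ hz)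
          have hVbW : ∀ z ∈ V b, z ∈ W := fun z hz =>
            Finset.mem_insert_of_mem (Finset.mem_union_right _ hz)
          -- bidirectional arcs between V 0 and {u} ∪ V b
          have hbi : ∀ q, (q = u ∨ q ∈ V b) → ∀ z ∈ V 0,
              (z, q) ∈ D.arcs ∧ (q, z) ∈ D.arcs := by
            intro q hq z hz
            rcases hq with rfl | hqb
            · exact hV0Vi z hz a ha1 hat q hua
            · exact hV0Vi z hz b hb1 hbt q hqb
          refine ⟨(D.addArc u v).induce W,
            ⟨Finset.inter_subset_left, Finset.filter_subset _ _⟩, ?_, ?_⟩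
          · rw [hiverts, hWcard]; omega
          · intro S hS
            have hverts : (((D.addArc u v).induce W).delete S).verts = W \ S := by
              show ((D.addArc u v).induce W).verts \ S = W \ S
              rw [hiverts]
            have hmem : ∀ x y : ℕ, ((x, y) ∈ D.arcs ∨ (x = u ∧ y = v)) → x ∈ W → y ∈ W →
                x ∉ S → y ∉ S → (x, y) ∈ (((D.addArc u v).induce W).delete S).arcs := by
              intro x y hxy hxW hyW hxS hyS
              refine Finset.mem_filter.mpr ⟨?_, hxS, hyS⟩
              refine Finset.mem_filter.mpr ⟨?_, hxW, hyW⟩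
              rw [harcs]
              rcases hxy with h | ⟨rfl, rfl⟩
              · exact Finset.mem_insert_of_mem h
              · exact Finset.mem_insert_self _ _
            by_cases hV0S : V 0 ⊆ S
            · have hSeq : S = V 0 :=
                (Finset.eq_of_subset_of_card_le hV0S (by rw [hVcard 0 (by omega)]; omega)).symm
              subst hSeq
              intro x hx y hy
              rw [hverts] at hx hy
              obtain ⟨hxW, hxS⟩ := Finset.mem_sdiff.mp hx
              obtain ⟨hyW, hyS⟩ := Finset.mem_sdiff.mp hy
              have hx' : x = u ∨ x ∈ V b := by
                rcases Finset.mem_insert.mp hxW with rfl | h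
                · exact Or.inl rfl
                rcases Finset.mem_union.mp h with h | h
                · exact absurd h hxS
                · exact Or.inr h
              have hy' : y = u ∨ y ∈ V b := by
                rcases Finset.mem_insert.mp hyW with rfl | h
                · exact Or.inl rfl
                rcases Finset.mem_union.mp h with h | h
                · exact absurd h hyS
                · exact Or.inr h
              rcases eq_or_ne x y with rfl | hxy
              · exact Relation.ReflTransGen.refl
              rcases hx' with rfl | hxb
              · rcases hy' with rfl | hyb
                · exact absurd rfl hxy
                · -- x = u, y ∈ V b : u → v → y
                  have h1 := hmem x v (Or.inr ⟨rfl, rfl⟩) huW hvW hxS hvb0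
                  rcases eq_or_ne v y with rfl | hvy
                  · exact Relation.ReflTransGen.single h1
                  · exact Relation.ReflTransGen.head h1 (Relation.ReflTransGen.single
                      (hmem v y (Or.inl (hVicomplete b hb1 hbt v hvb y hyb hvy))
                        hvW hyW hvb0 hyS))
              · rcases hy' with rfl | hyb
                · exact Relation.ReflTransGen.single
                    (hmem x y (Or.inl (hViVj b a hb1 hab hat x hxb y hua).1) hxW hyW hxS hyS)
                · exact Relation.ReflTransGen.single
                    (hmem x y (Or.inl (hVicomplete b hb1 hbt x hxb y hyb hxy)) hxW hyW hxS hyS)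
            · obtain ⟨w, hw0, hwS⟩ := Finset.not_subset.mp hV0S
              have hwW : w ∈ W := hV0W w hw0
              obtain ⟨p, hp, hpS⟩ : ∃ p ∈ insert u (V b), p ∉ S := by
                by_contra hcon
                push_neg at hcon
                have hc := Finset.card_le_card hcon
                rw [Finset.card_insert_of_notMem hub, hVcard b hbtlt] at hc
                omega
              have hp' : p = u ∨ p ∈ V b := by
                rcases Finset.mem_insert.mp hp with rfl | h
                · exact Or.inl rfl
                · exact Or.inr h
              have hpW : p ∈ W := by
                rcases hp' with rfl | h
                · exact huW
                · exact hVbW p h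
              have hkey : ∀ x ∈ (((D.addArc u v).induce W).delete S).verts,
                  (((D.addArc u v).induce W).delete S).Reach x w ∧
                  (((D.addArc u v).induce W).delete S).Reach w x := by
                intro x hx
                rw [hverts] at hx
                obtain ⟨hxW, hxS⟩ := Finset.mem_sdiff.mp hx
                have hx' : (x = u ∨ x ∈ V b) ∨ x ∈ V 0 := by
                  rcases Finset.mem_insert.mp hxW with rfl | h
                  · exact Or.inl (Or.inl rfl)
                  rcases Finset.mem_union.mp h with h | h
                  · exact Or.inr h
                  · exact Or.inl (Or.inr h)
                rcases hx' with hxp | hx0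
                · have h := hbi x hxp w hw0
                  exact ⟨Relation.ReflTransGen.single (hmem x w (Or.inl h.2) hxW hwW hxS hwS),
                    Relation.ReflTransGen.single (hmem w x (Or.inl h.1) hwW hxW hwS hxS)⟩
                · rcases eq_or_ne x w with rfl | hxw
                  · exact ⟨Relation.ReflTransGen.refl, Relation.ReflTransGen.refl⟩
                  · have h1 := hbi p hp' x hx0
                    have h2 := hbi p hp' w hw0
                    exact ⟨Relation.ReflTransGen.head
                        (hmem x p (Or.inl h1.1) hxW hpW hxS hpS)
                        (Relation.ReflTransGen.single
                          (hmem p w (Or.inl h2.2) hpW hwW hpS hwS)),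
                      Relation.ReflTransGen.head
                        (hmem w p (Or.inl h2.1) hwW hpW hwS hpS)
                        (Relation.ReflTransGen.single
                          (hmem p x (Or.inl h1.2) hpW hxW hpS hxS))⟩
              intro x hx y hy
              exact ((hkey x hx).1).trans ((hkey y hy).2)
end
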